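/- arXiv:1309.0260 — 3 statements merged into one kernel-verified Lean document; each statement's English description precedes it below -/
import Mathlib

section
/- Chen's identity: if X: [0,s] → E and Y: [s,t] → E are continuous paths of finite 1-variation and X*Y denotes their concatenation (defined by (X*Y)_u = X_u for u ∈ [0,s] and (X*Y)_u = X_s + Y_u - Y_s for u ∈ [s,t]), then S(X*Y) = S(X) ⊗ S(Y) in the tensor algebra T((E)). -/
open MeasureTheory Set

/-- Iterated integral of a path against its derivative; the head letter is integrated
outermost (so this corresponds to the reversed word). -/
noncomputable def iterInt {d : ℕ} (X : ℝ → Fin d → ℝ) (a : ℝ) : List (Fin d) → ℝ → ℝ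
  | [], _ => 1
  | i :: I, b => ∫ u in a..b, iterInt X a I u * deriv (fun s => X s i) u

/-- Coordinate iterated integral `π^I(S(X))` over `[a,b]` for the word `I = (i₁,…,iₙ)`
(innermost integration first). -/
noncomputable def sigCoord {d : ℕ} (X : ℝ → Fin d → ℝ) (a b : ℝ) (I : List (Fin d)) : ℝ :=
  iterInt X a I.reverse b

/-- The signature of a path over `[a,b]`, as the family of its coordinate iterated
integrals indexed by words; this represents an element of the tensor algebra `T((ℝ^d))`. -/
noncomputable def Sig {d : ℕ} (X : ℝ → Fin d → ℝ) (a b : ℝ) : List (Fin d) → ℝ :=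
  fun I => sigCoord X a b I

/-- The product of the tensor algebra `T((ℝ^d))` in coordinates. -/
noncomputable def tmul {d : ℕ} (x y : List (Fin d) → ℝ) : List (Fin d) → ℝ :=
  fun w => ∑ k ∈ Finset.range (w.length + 1), x (w.take k) * y (w.drop k)

/-- The unit of the tensor algebra. -/
def tunit {d : ℕ} : List (Fin d) → ℝ := fun w => if w = [] then 1 else 0

/-- The tensor exponential `exp(v) = Σ v^{⊗n}/n!` in coordinates. -/
noncomputable def texp {d : ℕ} (v : Fin d → ℝ) : List (Fin d) → ℝ :=
  fun w => (w.map v).prod / w.length.factorial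

/-- The multiset of shuffles of two words. -/
def shuffles {α : Type*} : List α → List α → Multiset (List α)
  | [], v => {v}
  | u, [] => {u}
  | a :: u, b :: v => ((shuffles u (b :: v)).map (a :: ·)) + ((shuffles (a :: u) v).map (b :: ·))
  termination_by u v => u.length + v.length

/-- `x` is in the range of the signature map on continuous bounded-variation paths. -/
def IsSignature {d : ℕ} (x : List (Fin d) → ℝ) : Prop :=
  ∃ (X : ℝ → Fin d → ℝ) (a b : ℝ), a ≤ b ∧ ContinuousOn X (Set.Icc a b) ∧
    BoundedVariationOn X (Set.Icc a b) ∧ x = Sig X a b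

/-- Evaluation of a (finitely supported) linear form on `T((ℝ^d))`. -/
noncomputable def formEval {d : ℕ} (f : List (Fin d) →₀ ℝ) (x : List (Fin d) → ℝ) : ℝ :=
  f.sum fun w c => c * x w

/-- The shuffle product of two linear forms, extended bilinearly from words. -/
noncomputable def shuffleForm {d : ℕ} (f g : List (Fin d) →₀ ℝ) : List (Fin d) →₀ ℝ :=
  f.sum fun u cu => g.sum fun v cv =>
    (cu * cv) • ((shuffles u v).map fun w => Finsupp.single w (1 : ℝ)).sum

/-!
Chen's identity holds for a single path `Z` split at an intermediate time `s`: splitting the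
outermost integral of `iterInt Z a (i :: I) b` at `s` and expanding the integrand on `[s, b]` by
induction on the word gives
`∑ₖ iterInt Z s (I.take k) b * iterInt Z a (I.drop k) s`, which after reversing words is the
tensor product `S_{a,s}(Z) ⊗ S_{s,b}(Z)`. Iterated integrals only see the
derivative, which for the concatenation is that of `X` on `(0, s)` and of `Y` on `(s, t)`, and
bounded variation makes all these derivatives integrable.
-/

theorem BoundedVariationOn.intervalIntegrable_deriv_apply {ι : Type*} [Fintype ι]
    {X : ℝ → ι → ℝ} {a b : ℝ} (hX : BoundedVariationOn X (uIcc a b)) (i : ι) :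
    IntervalIntegrable (deriv fun u => X u i) volume a b :=
  ((LipschitzWith.eval i).comp_boundedVariationOn hX).intervalIntegrable_deriv

theorem List.sum_range_reverse_take_drop {α M : Type*} [AddCommMonoid M]
    (F : List α → List α → M) (w : List α) :
    ∑ k ∈ Finset.range (w.length + 1), F (w.reverse.take k) (w.reverse.drop k) =
      ∑ k ∈ Finset.range (w.length + 1), F (w.drop k).reverse (w.take k).reverse := by
  rw [← Finset.sum_range_reflect]
  refine Finset.sum_congr rfl fun k _ => ?_
  rw [List.reverse_take, List.reverse_drop, Nat.add_sub_cancel]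

section IteratedIntegrals

variable {d : ℕ}

@[simp]
theorem iterInt_nil (X : ℝ → Fin d → ℝ) (a b : ℝ) : iterInt X a [] b = 1 := rfl

theorem iterInt_cons (X : ℝ → Fin d → ℝ) (a b : ℝ) (i : Fin d) (I : List (Fin d)) :
    iterInt X a (i :: I) b = ∫ u in a..b, iterInt X a I u * deriv (fun v => X v i) u := rfl

variable {X Z : ℝ → Fin d → ℝ} {a s b : ℝ}

theorem continuousOn_iterInt (hX : ∀ i, IntervalIntegrable (deriv fun u => X u i) volume a b)
    (I : List (Fin d)) : ContinuousOn (iterInt X a I) (uIcc a b) := by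
  induction I with
  | nil => exact continuousOn_const
  | cons i I ih =>
    exact intervalIntegral.continuousOn_primitive_interval' ((hX i).continuousOn_mul ih)
      left_mem_uIcc

theorem intervalIntegrable_iterInt_mul_deriv
    (hX : ∀ i, IntervalIntegrable (deriv fun u => X u i) volume a b) (i : Fin d)
    (I : List (Fin d)) :
    IntervalIntegrable (fun u => iterInt X a I u * deriv (fun v => X v i) u) volume a b :=
  (hX i).continuousOn_mul (continuousOn_iterInt hX I)

theorem iterInt_congr (h : ∀ i, EqOn (deriv fun u => X u i) (deriv fun u => Z u i) (Ioo a b))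
    (I : List (Fin d)) : EqOn (iterInt X a I) (iterInt Z a I) (Icc a b) := by
  induction I with
  | nil => exact fun _ _ => rfl
  | cons i I ih =>
    intro c hc
    refine intervalIntegral.integral_congr_uIoo fun u hu => ?_
    rw [uIoo_of_le hc.1] at hu
    rw [ih ⟨hu.1.le, hu.2.le.trans hc.2⟩, h i ⟨hu.1, hu.2.trans_le hc.2⟩]

theorem Sig_congr (h : ∀ i, EqOn (deriv fun u => X u i) (deriv fun u => Z u i) (Ioo a b))
    (hab : a ≤ b) : Sig X a b = Sig Z a b :=
  funext fun I => iterInt_congr h I.reverse ⟨hab, le_rfl⟩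

theorem iterInt_eq_sum_take_drop (has : a ≤ s) (hsb : s ≤ b)
    (hZ : ∀ i, IntervalIntegrable (deriv fun u => Z u i) volume a b) (I : List (Fin d)) :
    iterInt Z a I b = ∑ k ∈ Finset.range (I.length + 1),
      iterInt Z s (I.take k) b * iterInt Z a (I.drop k) s := by
  induction I generalizing b with
  | nil => simp
  | cons i I ih =>
    have hs_mem : s ∈ uIcc a b := mem_uIcc_of_le has hsb
    have hsplit : iterInt Z a (i :: I) b = iterInt Z a (i :: I) s
        + ∫ u in s..b, iterInt Z a I u * deriv (fun v => Z v i) u := by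
      have hint := intervalIntegrable_iterInt_mul_deriv hZ i I
      exact (intervalIntegral.integral_add_adjacent_intervals
        (hint.mono_set (uIcc_subset_uIcc left_mem_uIcc hs_mem))
        (hint.mono_set (uIcc_subset_uIcc hs_mem right_mem_uIcc))).symm
    have hrestart : ∫ u in s..b, iterInt Z a I u * deriv (fun v => Z v i) u
        = ∑ k ∈ Finset.range (I.length + 1),
            iterInt Z s (i :: I.take k) b * iterInt Z a (I.drop k) s := by
      have hZs : ∀ i, IntervalIntegrable (deriv fun u => Z u i) volume s b := fun i =>
        (hZ i).mono_set (uIcc_subset_uIcc hs_mem right_mem_uIcc)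
      calc _ = ∫ u in s..b, ∑ k ∈ Finset.range (I.length + 1), iterInt Z a (I.drop k) s *
            (iterInt Z s (I.take k) u * deriv (fun v => Z v i) u) := by
            refine intervalIntegral.integral_congr fun u hu => ?_
            rw [uIcc_of_le hsb] at hu
            rw [ih hu.1 fun j => (hZ j).mono_set (uIcc_subset_uIcc left_mem_uIcc
              (mem_uIcc_of_le (has.trans hu.1) hu.2)), Finset.sum_mul]
            exact Finset.sum_congr rfl fun k _ => by ring
        _ = _ := by
            rw [intervalIntegral.integral_finsetSum fun k _ =>
              (intervalIntegrable_iterInt_mul_deriv hZs i _).const_mul _]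
            exact Finset.sum_congr rfl fun k _ => by
              rw [intervalIntegral.integral_const_mul, iterInt_cons, mul_comm]
    rw [hsplit, hrestart, List.length_cons, Finset.sum_range_succ' _ (I.length + 1)]
    simp [add_comm]

end IteratedIntegrals

theorem Sig_eq_tmul {d : ℕ} {Z : ℝ → Fin d → ℝ} {a s b : ℝ} (has : a ≤ s) (hsb : s ≤ b)
    (hZ : ∀ i, IntervalIntegrable (deriv fun u => Z u i) volume a b) :
    Sig Z a b = tmul (Sig Z a s) (Sig Z s b) := by
  funext w
  rw [Sig, sigCoord, iterInt_eq_sum_take_drop has hsb hZ, List.length_reverse,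
    List.sum_range_reverse_take_drop (fun u v => iterInt Z s u b * iterInt Z a v s)]
  simp only [tmul, Sig, sigCoord, mul_comm]

theorem chen_identity_general {d : ℕ} (X Y : ℝ → Fin d → ℝ) (s t : ℝ) (hs : 0 ≤ s) (hst : s ≤ t)
    (hXv : BoundedVariationOn X (Set.Icc 0 s))
    (hYv : BoundedVariationOn Y (Set.Icc s t)) :
    Sig (fun u => if u ≤ s then X u else fun i => X s i + Y u i - Y s i) 0 t
      = tmul (Sig X 0 s) (Sig Y s t) := by
  set Z : ℝ → Fin d → ℝ := fun u => if u ≤ s then X u else fun i => X s i + Y u i - Y s i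
  have hZX (i : Fin d) : EqOn (deriv fun u => Z u i) (deriv fun u => X u i) (Ioo 0 s) := by
    have : EqOn (fun u => Z u i) (fun u => X u i) (Iio s) := fun u hu => by
      simp [Z, (mem_Iio.mp hu).le]
    exact (this.deriv isOpen_Iio).mono Ioo_subset_Iio_self
  have hZY (i : Fin d) : EqOn (deriv fun u => Z u i) (deriv fun u => Y u i) (Ioo s t) := by
    have : EqOn (fun u => Z u i) (fun u => Y u i + (X s i - Y s i)) (Ioi s) := fun u hu => by
      simp only [Z, if_neg (not_le.mpr (mem_Ioi.mp hu))]
      ring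
    intro u hu
    rw [this.deriv isOpen_Ioi hu.1, deriv_add_const]
  have hZ (i : Fin d) : IntervalIntegrable (deriv fun u => Z u i) volume 0 t := by
    have hX := (uIcc_of_le hs ▸ hXv).intervalIntegrable_deriv_apply i
    have hY := (uIcc_of_le hst ▸ hYv).intervalIntegrable_deriv_apply i
    exact (hX.congr_uIoo (uIoo_of_le hs ▸ (hZX i).symm)).trans
      (hY.congr_uIoo (uIoo_of_le hst ▸ (hZY i).symm))
  rw [Sig_eq_tmul hs hst hZ, Sig_congr hZX hs, Sig_congr hZY hst]

/-- Chen's identity for the concatenation of two continuous paths of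
finite 1-variation. -/
theorem chen_identity {d : ℕ} (X Y : ℝ → Fin d → ℝ) (s t : ℝ) (hs : 0 ≤ s) (hst : s ≤ t)
    (hXc : ContinuousOn X (Set.Icc 0 s)) (hXv : BoundedVariationOn X (Set.Icc 0 s))
    (hYc : ContinuousOn Y (Set.Icc s t)) (hYv : BoundedVariationOn Y (Set.Icc s t)) :
    Sig (fun u => if u ≤ s then X u else fun i => X s i + Y u i - Y s i) 0 t
      = tmul (Sig X 0 s) (Sig Y s t) :=
  chen_identity_general X Y s t hs hst hXv hYv
end

section
/- The signature of the time-joined path of a time series {(t_i, r_i)}_{i=m}^n equals exp(r_m e_2) ⊗ ⨂_{i=m}^{n-1} (exp((t_{i+1}−t_i) e_1) ⊗ exp((r_{i+1}−r_i) e_2)) in T((ℝ^2)). -/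
open MeasureTheory Set

/-!
Chen's identity `S_{a,b} = S_{a,c} ⊗ S_{c,b}` follows by induction on the word, splitting the
outermost integral at `c` and expanding the integrand by the induction hypothesis. On a linear
segment with velocity `v` the iterated integral along a word `w` is `∏ v_{w_i} (b - a)^|w| / |w|!`,
i.e. the signature is `exp((b - a) v)`. Hence the signature of a piecewise linear path is the
ordered product of the exponentials of its increments, and the time-joined path is piecewise
linear on unit intervals, moving alternately in the `e₁` and `e₂` direction.
-/

section

variable {d : ℕ}

theorem tmul_tunit (x : List (Fin d) → ℝ) : tmul x tunit = x := by
  funext w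
  rw [tmul, Finset.sum_eq_single_of_mem w.length (by simp)]
  · simp [tunit]
  · intro k hk hne
    have : w.drop k ≠ [] := by
      simp only [Finset.mem_range] at hk
      simp only [ne_eq, List.drop_eq_nil_iff, not_le]
      omega
    simp [tunit, this]

theorem tunit_tmul (x : List (Fin d) → ℝ) : tmul tunit x = x := by
  funext w
  rw [tmul, Finset.sum_eq_single_of_mem 0 (by simp)]
  · simp [tunit]
  · intro k hk hne
    have : w.take k ≠ [] := by
      simp only [Finset.mem_range] at hk
      simp only [ne_eq, List.take_eq_nil_iff, not_or]
      exact ⟨hne, by rintro rfl; simp at hk; omega⟩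
    simp [tunit, this]

theorem tmul_assoc (x y z : List (Fin d) → ℝ) : tmul (tmul x y) z = tmul x (tmul y z) := by
  funext w
  simp only [tmul, Finset.sum_mul, Finset.mul_sum]
  rw [Finset.sum_comm' (t' := Finset.range (w.length + 1)) (s' := fun j => Finset.Icc j w.length)
    (f := fun k j => x ((w.take k).take j) * y ((w.take k).drop j) * z (w.drop k))]
  · refine Finset.sum_congr rfl fun j hj => ?_
    rw [Finset.mem_range] at hj
    rw [← Finset.Ico_add_one_right_eq_Icc, Finset.sum_Ico_eq_sum_range,
      show w.length + 1 - j = (w.drop j).length + 1 by simp; omega]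
    refine Finset.sum_congr rfl fun k hk => ?_
    rw [Finset.mem_range, List.length_drop] at hk
    rw [List.take_take, List.drop_take, List.drop_drop, min_eq_left (by omega),
      Nat.add_sub_cancel_left, mul_assoc]
  · intro k j
    simp only [Finset.mem_range, Finset.mem_Icc, List.length_take]
    omega

theorem foldr_tmul_append_singleton (L : List (List (Fin d) → ℝ)) (x : List (Fin d) → ℝ) :
    (L ++ [x]).foldr tmul tunit = tmul (L.foldr tmul tunit) x := by
  induction L with
  | nil => simp [tunit_tmul, tmul_tunit]
  | cons y L ih => simp only [List.cons_append, List.foldr_cons, ih, tmul_assoc]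

theorem foldr_tmul_range_two_mul_add_one (f : ℕ → List (Fin d) → ℝ) (K : ℕ) :
    ((List.range (2 * K + 1)).map f).foldr tmul tunit =
      tmul (f 0) (((List.range K).map fun k => tmul (f (2 * k + 1)) (f (2 * k + 2))).foldr
        tmul tunit) := by
  induction K with
  | zero => simp
  | succ K ih =>
    rw [show 2 * (K + 1) + 1 = 2 * K + 1 + 1 + 1 by ring, List.range_succ (n := 2 * K + 1 + 1),
      List.range_succ (n := 2 * K + 1), List.range_succ (n := K)]
    simp only [List.map_append, List.map_cons, List.map_nil, foldr_tmul_append_singleton, ih,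
      tmul_assoc]

end

section

variable {d : ℕ} {X : ℝ → Fin d → ℝ} {a b c : ℝ}

theorem sig_self (X : ℝ → Fin d → ℝ) (a : ℝ) : Sig X a a = tunit := by
  funext w
  cases w using List.reverseRecOn <;> simp [Sig, sigCoord, iterInt, tunit]

theorem continuousOn_iterInt_s11 (hab : a ≤ b)
    (hd : ∀ i, IntegrableOn (deriv fun s => X s i) (Icc a b)) :
    ∀ J, ContinuousOn (iterInt X a J) (Icc a b)
  | [] => continuousOn_const
  | i :: J => by
    have h := intervalIntegral.continuousOn_primitive_interval (μ := volume)
      (((hd i).continuousOn_mul (continuousOn_iterInt_s11 hab hd J) isCompact_Icc).mono_set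
        (uIcc_of_le hab).subset)
    rwa [uIcc_of_le hab] at h

theorem integrableOn_iterInt_mul_deriv (hab : a ≤ b)
    (hd : ∀ i, IntegrableOn (deriv fun s => X s i) (Icc a b)) (J : List (Fin d)) (i : Fin d) :
    IntegrableOn (fun u => iterInt X a J u * deriv (fun s => X s i) u) (Icc a b) :=
  (hd i).continuousOn_mul (continuousOn_iterInt_s11 hab hd J) isCompact_Icc

theorem iterInt_chen (hac : a ≤ c) (hcb : c ≤ b)
    (hd : ∀ i, IntegrableOn (deriv fun s => X s i) (Icc a b)) :
    ∀ (J : List (Fin d)), ∀ u ∈ Icc c b, iterInt X a J u =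
      ∑ k ∈ Finset.range (J.length + 1), iterInt X c (J.take k) u * iterInt X a (J.drop k) c
  | [], u, _ => by simp [iterInt]
  | i :: J, u, hu => by
    have hab := hac.trans hcb
    have hd' : ∀ i, IntegrableOn (deriv fun s => X s i) (Icc c b) :=
      fun i => (hd i).mono_set (Icc_subset_Icc_left hac)
    have hint : ∀ x ∈ Icc a b, ∀ y ∈ Icc a b, IntervalIntegrable
        (fun v => iterInt X a J v * deriv (fun s => X s i) v) volume x y :=
      fun x hx y hy => ((integrableOn_iterInt_mul_deriv hab hd J i).mono_set
        (uIcc_subset_Icc hx hy)).intervalIntegrable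
    have hcu : c ∈ Icc a b := ⟨hac, hcb⟩
    have hub : u ∈ Icc a b := ⟨hac.trans hu.1, hu.2⟩
    have tail : (∫ v in c..u, iterInt X a J v * deriv (fun s => X s i) v) =
        ∑ k ∈ Finset.range (J.length + 1),
          iterInt X c (i :: J.take k) u * iterInt X a (J.drop k) c := by
      rw [intervalIntegral.integral_congr (g := fun v => ∑ k ∈ Finset.range (J.length + 1),
          iterInt X a (J.drop k) c * (iterInt X c (J.take k) v * deriv (fun s => X s i) v)),
        intervalIntegral.integral_finsetSum]
      · refine Finset.sum_congr rfl fun k _ => ?_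
        rw [intervalIntegral.integral_const_mul, iterInt, mul_comm]
      · exact fun k _ => (((integrableOn_iterInt_mul_deriv hcb hd' _ i).mono_set
          (uIcc_subset_Icc ⟨le_rfl, hcb⟩ hu)).intervalIntegrable).const_mul _
      · intro v hv
        rw [uIcc_of_le hu.1] at hv
        simp only [iterInt_chen hac hcb hd J v ⟨hv.1, hv.2.trans hu.2⟩, Finset.sum_mul]
        exact Finset.sum_congr rfl fun k _ => by ring
    rw [iterInt, ← intervalIntegral.integral_add_adjacent_intervals (hint a ⟨le_rfl, hab⟩ c hcu)
      (hint c hcu u hub), tail, List.length_cons, Finset.sum_range_succ' _ (J.length + 1)]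
    simp [iterInt, add_comm]

theorem sig_chen (hac : a ≤ c) (hcb : c ≤ b)
    (hd : ∀ i, IntegrableOn (deriv fun s => X s i) (Icc a b)) :
    Sig X a b = tmul (Sig X a c) (Sig X c b) := by
  funext w
  simp only [Sig, sigCoord, tmul]
  rw [iterInt_chen hac hcb hd w.reverse b ⟨hcb, le_rfl⟩, List.length_reverse,
    ← Finset.sum_range_reflect]
  refine Finset.sum_congr rfl fun j hj => ?_
  rw [Finset.mem_range] at hj
  rw [Nat.add_sub_cancel, List.reverse_drop, List.reverse_take, mul_comm]

end

section

variable {d : ℕ} {X : ℝ → Fin d → ℝ} {a b : ℝ} {v : Fin d → ℝ}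

theorem deriv_eq_of_affine (hX : ∀ s ∈ Icc a b, X s = X a + (s - a) • v) (i : Fin d) :
    ∀ x ∈ Ioo a b, deriv (fun s => X s i) x = v i := by
  intro x hx
  have hloc : (fun s => X s i) =ᶠ[nhds x] fun s => X a i + (s - a) * v i := by
    filter_upwards [Ioo_mem_nhds hx.1 hx.2] with s hs
    simp [hX s (Ioo_subset_Icc_self hs)]
  rw [hloc.deriv_eq]
  simp

theorem integrableOn_deriv_of_affine (hX : ∀ s ∈ Icc a b, X s = X a + (s - a) • v) (i : Fin d) :
    IntegrableOn (deriv fun s => X s i) (Icc a b) := by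
  rw [integrableOn_Icc_iff_integrableOn_Ioo]
  exact (integrableOn_const measure_Ioo_lt_top.ne).congr_fun
    (fun x hx => (deriv_eq_of_affine hX i x hx).symm) measurableSet_Ioo

theorem iterInt_of_affine (hX : ∀ s ∈ Icc a b, X s = X a + (s - a) • v) :
    ∀ (J : List (Fin d)), ∀ u ∈ Icc a b,
      iterInt X a J u = (J.map v).prod * (u - a) ^ J.length / J.length.factorial
  | [], _, _ => by simp [iterInt]
  | i :: J, u, hu => by
    have hae : ∀ᵐ x, x ∈ uIoc a u → iterInt X a J x * deriv (fun s => X s i) x =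
        (J.map v).prod * v i / J.length.factorial * (x - a) ^ J.length := by
      filter_upwards [Measure.ae_ne volume b] with x hxb hx
      rw [uIoc_of_le hu.1] at hx
      rw [iterInt_of_affine hX J x ⟨hx.1.le, hx.2.trans hu.2⟩,
        deriv_eq_of_affine hX i x ⟨hx.1, (hx.2.trans hu.2).lt_of_ne hxb⟩]
      ring
    rw [iterInt, intervalIntegral.integral_congr_ae hae, intervalIntegral.integral_const_mul,
      intervalIntegral.integral_comp_sub_right (· ^ J.length), integral_pow]
    simp only [List.map_cons, List.prod_cons, List.length_cons, Nat.factorial_succ]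
    push_cast
    field_simp
    ring

theorem sig_of_affine (hab : a ≤ b) (hX : ∀ s ∈ Icc a b, X s = X a + (s - a) • v) :
    Sig X a b = texp ((b - a) • v) := by
  funext w
  rw [Sig, sigCoord, iterInt_of_affine hX w.reverse b ⟨hab, le_rfl⟩, texp]
  simp only [Pi.smul_def, smul_eq_mul, List.prod_map_mul, List.map_const', List.prod_replicate,
    List.length_reverse, List.map_reverse, List.prod_reverse]
  ring

end

section

variable {d : ℕ} {X : ℝ → Fin d → ℝ} {τ : ℕ → ℝ} {v : ℕ → Fin d → ℝ}

theorem integrableOn_deriv_of_piecewise_affine (hτ : Monotone τ) {N : ℕ}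
    (hX : ∀ j < N, ∀ s ∈ Icc (τ j) (τ (j + 1)), X s = X (τ j) + (s - τ j) • v j) (i : Fin d) :
    IntegrableOn (deriv fun s => X s i) (Icc (τ 0) (τ N)) := by
  induction N with
  | zero => simp
  | succ N ih =>
    rw [← Icc_union_Icc_eq_Icc (hτ N.zero_le) (hτ N.le_succ)]
    exact (ih fun j hj => hX j (by omega)).union
      (integrableOn_deriv_of_affine (hX N N.lt_succ_self) i)

theorem sig_of_piecewise_affine (hτ : Monotone τ) {N : ℕ}
    (hX : ∀ j < N, ∀ s ∈ Icc (τ j) (τ (j + 1)), X s = X (τ j) + (s - τ j) • v j) :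
    Sig X (τ 0) (τ N) =
      ((List.range N).map fun j => texp ((τ (j + 1) - τ j) • v j)).foldr tmul tunit := by
  induction N with
  | zero => simp [sig_self]
  | succ N ih =>
    rw [sig_chen (hτ N.zero_le) (hτ N.le_succ) (integrableOn_deriv_of_piecewise_affine hτ hX),
      ih fun j hj => hX j (by omega), sig_of_affine (hτ N.le_succ) (hX N N.lt_succ_self),
      List.range_succ, List.map_append, List.map_singleton, foldr_tmul_append_singleton]

end

/-- The velocity of the time-joined path on its `j`-th unit segment `[2m + j, 2m + j + 1]`. -/
def timeJoinedVelocity (t r : ℕ → ℝ) (m : ℕ) : ℕ → Fin 2 → ℝ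
  | 0 => ![0, r m]
  | j + 1 => if Even j then ![t (m + j / 2 + 1) - t (m + j / 2), 0]
    else ![0, r (m + j / 2 + 1) - r (m + j / 2)]

@[simp]
theorem timeJoinedVelocity_zero (t r : ℕ → ℝ) (m : ℕ) : timeJoinedVelocity t r m 0 = ![0, r m] :=
  rfl

@[simp]
theorem timeJoinedVelocity_two_mul_add_one (t r : ℕ → ℝ) (m k : ℕ) :
    timeJoinedVelocity t r m (2 * k + 1) = ![t (m + k + 1) - t (m + k), 0] := by
  simp [timeJoinedVelocity]

@[simp]
theorem timeJoinedVelocity_two_mul_add_two (t r : ℕ → ℝ) (m k : ℕ) :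
    timeJoinedVelocity t r m (2 * k + 2) = ![0, r (m + k + 1) - r (m + k)] := by
  simp [timeJoinedVelocity, show (2 * k + 1) / 2 = k by omega]

theorem eq_add_smul_timeJoinedVelocity (t r : ℕ → ℝ) (m n : ℕ) (R : ℝ → Fin 2 → ℝ)
    (hR1 : ∀ s ∈ Set.Icc (2*m : ℝ) (2*m+1), R s = ![t m, r m * (s - 2*m)])
    (hR2 : ∀ i, m ≤ i → i < n → ∀ s ∈ Set.Icc (2*i+1 : ℝ) (2*i+2),
      R s = ![t i + (t (i+1) - t i) * (s - (2*i+1)), r i])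
    (hR3 : ∀ i, m ≤ i → i < n → ∀ s ∈ Set.Icc (2*i+2 : ℝ) (2*i+3),
      R s = ![t (i+1), r i + (r (i+1) - r i) * (s - (2*i+2))]) :
    ∀ j < 2 * (n - m) + 1, ∀ s ∈ Icc (2 * m + j : ℝ) (2 * m + ↑(j + 1)),
      R s = R (2 * m + j) + (s - (2 * m + j)) • timeJoinedVelocity t r m j := by
  intro j hj s hs
  rcases j with _ | j
  · have hs : s ∈ Icc (2 * m : ℝ) (2 * m + 1) := by simpa using hs
    rw [hR1 s hs, hR1 _ ⟨by simp, by simp⟩]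
    ext l
    fin_cases l <;> simp [mul_comm]
  obtain ⟨k, rfl | rfl⟩ := Nat.even_or_odd' j
  · have hk : m ≤ m + k ∧ m + k < n := by omega
    have e : (2 * m + ((2 * k + 1 : ℕ) : ℝ)) = 2 * ((m + k : ℕ) : ℝ) + 1 := by push_cast; ring
    have hs : s ∈ Icc (2 * ((m + k : ℕ) : ℝ) + 1) (2 * ((m + k : ℕ) : ℝ) + 2) := by
      constructor <;> push_cast at hs ⊢ <;> linarith [hs.1, hs.2]
    rw [e, hR2 _ hk.1 hk.2 s hs, hR2 _ hk.1 hk.2 _ ⟨le_rfl, by linarith⟩]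
    ext l
    fin_cases l <;> simp
    ring
  · have hk : m ≤ m + k ∧ m + k < n := by omega
    have e : (2 * m + ((2 * k + 1 + 1 : ℕ) : ℝ)) = 2 * ((m + k : ℕ) : ℝ) + 2 := by push_cast; ring
    have hs : s ∈ Icc (2 * ((m + k : ℕ) : ℝ) + 2) (2 * ((m + k : ℕ) : ℝ) + 3) := by
      constructor <;> push_cast at hs ⊢ <;> linarith [hs.1, hs.2]
    rw [e, hR3 _ hk.1 hk.2 s hs, hR3 _ hk.1 hk.2 _ ⟨le_rfl, by linarith⟩]
    ext l
    fin_cases l <;> simp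
    ring

/-- the signature of the time-joined path of a time series is the tensor
product of tensor exponentials of the successive increments. -/
theorem signature_time_joined (t r : ℕ → ℝ) (m n : ℕ) (hmn : m < n)
    (R : ℝ → Fin 2 → ℝ)
    (hR1 : ∀ s ∈ Set.Icc (2*m : ℝ) (2*m+1), R s = ![t m, r m * (s - 2*m)])
    (hR2 : ∀ i, m ≤ i → i < n → ∀ s ∈ Set.Icc (2*i+1 : ℝ) (2*i+2),
      R s = ![t i + (t (i+1) - t i) * (s - (2*i+1)), r i])
    (hR3 : ∀ i, m ≤ i → i < n → ∀ s ∈ Set.Icc (2*i+2 : ℝ) (2*i+3),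
      R s = ![t (i+1), r i + (r (i+1) - r i) * (s - (2*i+2))]) :
    Sig R (2*m) (2*n+1) = tmul (texp ![0, r m])
      (((List.range (n - m)).map fun k =>
          tmul (texp ![t (m+k+1) - t (m+k), 0])
               (texp ![0, r (m+k+1) - r (m+k)])).foldr tmul tunit) := by
  have hτ : Monotone fun j : ℕ => (2 * m + j : ℝ) := fun i j hij => by simpa using hij
  have hsig := sig_of_piecewise_affine hτ (eq_add_smul_timeJoinedVelocity t r m n R hR1 hR2 hR3)
  have hN : (2 * m + ((2 * (n - m) + 1 : ℕ) : ℝ)) = 2 * n + 1 := by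
    rw [Nat.cast_add, Nat.cast_mul, Nat.cast_sub hmn.le]; push_cast; ring
  beta_reduce at hsig
  rw [hN] at hsig
  simp only [Nat.cast_zero, add_zero, Nat.cast_succ, add_sub_add_left_eq_sub, add_sub_cancel_left,
    one_smul] at hsig
  rw [hsig, foldr_tmul_range_two_mul_add_one]
  simp
end

section
/- ARCH is a special case of the ES model for moments 1 and 2: under the ARCH(q) assumptions with linear mean equation μ_k = β_0 + Σ_{i=1}^Q β_i r_{k−i}, one has E[r_k | F_{k−1}] = μ_k and E[r_k^2 | F_{k−1}] = μ_k^2 + α_0 + Σ_{i=1}^q α_i (r_{k−i} − μ_{k−i})^2, both polynomials in r_{k−1},...,r_{k−q−Q}; hence (since every polynomial in the lagged values is a linear functional of the signature of the time-joined path of the lagged series) there exist linear forms f_1, f_2 on T((ℝ^2)) with E[r_k^n | F_{k−1}] = f_n(S({(t_{k−i}, r_{k−i})}_{i=1}^{q+Q})) for n = 1, 2. -/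
open MeasureTheory Set

namespace ArchAux

/-- step slope function -/
noncomputable def W (N : ℕ) (V : ℕ → Fin 2 → ℝ) (i : Fin 2) : ℝ → ℝ :=
  fun u => ∑ n ∈ Finset.range N, Set.indicator (Set.Ioo (n:ℝ) (n+1)) (fun _ => V n i) u

lemma W_meas (N : ℕ) (V : ℕ → Fin 2 → ℝ) (i : Fin 2) : Measurable (W N V i) := by
  refine Finset.measurable_sum _ fun n _ => ?_
  exact (measurable_const (a := V n i)).indicator measurableSet_Ioo

lemma W_bdd (N : ℕ) (V : ℕ → Fin 2 → ℝ) (i : Fin 2) :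
    ∀ u, |W N V i u| ≤ ∑ n ∈ Finset.range N, |V n i| := by
  intro u
  refine (Finset.abs_sum_le_sum_abs _ _).trans (Finset.sum_le_sum fun n _ => ?_)
  by_cases h : u ∈ Set.Ioo (n:ℝ) (n+1)
  · rw [Set.indicator_of_mem h]
  · rw [Set.indicator_of_notMem h]; simp [abs_nonneg]

lemma W_eq {N : ℕ} {V : ℕ → Fin 2 → ℝ} {i : Fin 2} {n : ℕ} (hn : n < N) {u : ℝ}
    (hu : u ∈ Set.Ioo (n:ℝ) (n+1)) : W N V i u = V n i := by
  rw [W, Finset.sum_eq_single_of_mem n (Finset.mem_range.2 hn)]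
  · rw [Set.indicator_of_mem hu]
  · intro n' _ hne
    rw [Set.indicator_of_notMem]
    rintro ⟨h1, h2⟩
    obtain ⟨h3, h4⟩ := hu
    have : n < n' + 1 := by exact_mod_cast (h3.trans h2 : (n:ℝ) < n' + 1)
    have : n' < n + 1 := by exact_mod_cast (h1.trans h4 : (n':ℝ) < n + 1)
    omega

noncomputable def J (N : ℕ) (V : ℕ → Fin 2 → ℝ) : List (Fin 2) → ℝ → ℝ
  | [], _ => 1
  | i :: I, u => ∫ v in (0:ℝ)..u, J N V I v * W N V i v

lemma J_intble {N : ℕ} {V : ℕ → Fin 2 → ℝ} {I : List (Fin 2)} (hc : Continuous (J N V I))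
    (i : Fin 2) (a b : ℝ) :
    IntervalIntegrable (fun v => J N V I v * W N V i v) MeasureTheory.volume a b := by
  obtain ⟨C, hC⟩ := (isCompact_uIcc (a := a) (b := b)).exists_bound_of_continuousOn
    hc.continuousOn
  set D := ∑ n ∈ Finset.range N, |V n i| with hD
  refine IntervalIntegrable.mono_fun' (g := fun _ => C * D) (intervalIntegrable_const) ?_ ?_
  · exact (hc.aestronglyMeasurable.mul (W_meas N V i).aestronglyMeasurable).restrict
  · refine (MeasureTheory.ae_restrict_iff' measurableSet_uIoc).2 (Filter.Eventually.of_forall ?_)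
    intro v hv
    have h1 : ‖J N V I v‖ ≤ C := hC v (Set.uIoc_subset_uIcc hv)
    have h2 : |W N V i v| ≤ D := W_bdd N V i v
    calc ‖J N V I v * W N V i v‖ = ‖J N V I v‖ * |W N V i v| := by
          rw [norm_mul]; rfl
      _ ≤ C * D := mul_le_mul h1 h2 (abs_nonneg _) ((norm_nonneg _).trans h1)

lemma J_cont (N : ℕ) (V : ℕ → Fin 2 → ℝ) : ∀ I : List (Fin 2), Continuous (J N V I)
  | [] => continuous_const
  | (i :: I) => by
      have hc := J_cont N V I
      exact intervalIntegral.continuous_primitive (J_intble hc i) 0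

lemma J_segment {N : ℕ} {V : ℕ → Fin 2 → ℝ} :
    ∀ (I : List (Fin 2)) {n : ℕ}, n < N → ∀ {u : ℝ}, u ∈ Set.Icc (n:ℝ) ((n:ℝ)+1) →
    J N V I u = ∑ k ∈ Finset.range (I.length + 1),
      J N V (I.drop k) n * ((I.take k).map (V n)).prod * (u - n)^k / (Nat.factorial k)
  | [], n, hn, u, hu => by simp [J]
  | (i :: I), n, hn, u, hu => by
      have hpoly : ∀ v ∈ Set.Icc (n:ℝ) ((n:ℝ)+1),
          J N V I v = ∑ k ∈ Finset.range (I.length + 1),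
            J N V (I.drop k) n * ((I.take k).map (V n)).prod * (v - n)^k / (Nat.factorial k) :=
        fun v hv => J_segment I hn hv
      have hW : ∀ v ∈ Set.Ioo (n:ℝ) ((n:ℝ)+1), W N V i v = V n i := by
        intro v hv
        exact W_eq hn (by exact_mod_cast hv)
      have hsplit : J N V (i :: I) u = J N V (i :: I) n
          + ∫ v in (n:ℝ)..u, J N V I v * W N V i v := by
        show (∫ v in (0:ℝ)..u, J N V I v * W N V i v)
          = (∫ v in (0:ℝ)..(n:ℝ), J N V I v * W N V i v) + _
        rw [intervalIntegral.integral_add_adjacent_intervals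
          (J_intble (J_cont N V I) i 0 n) (J_intble (J_cont N V I) i n u)]
      rw [hsplit]
      have hcongr : (∫ v in (n:ℝ)..u, J N V I v * W N V i v)
          = ∫ v in (n:ℝ)..u, (∑ k ∈ Finset.range (I.length + 1),
              (J N V (I.drop k) n * ((I.take k).map (V n)).prod / (Nat.factorial k))
                * (v - n)^k * V n i) := by
        refine intervalIntegral.integral_congr_ae ?_
        have hne : ∀ᵐ v ∂(MeasureTheory.volume : Measure ℝ), v ≠ (n:ℝ) + 1 := by
          rw [Filter.eventually_iff, MeasureTheory.mem_ae_iff]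
          simpa using measure_singleton ((n:ℝ)+1)
        filter_upwards [hne] with v hv hv'
        have huIoc : v ∈ Set.Ioc (n:ℝ) u := by
          rwa [Set.uIoc_of_le hu.1] at hv'
        have hvIoo : v ∈ Set.Ioo (n:ℝ) ((n:ℝ)+1) :=
          ⟨huIoc.1, lt_of_le_of_ne (huIoc.2.trans hu.2) hv⟩
        rw [hpoly v ⟨hvIoo.1.le, hvIoo.2.le⟩, hW v hvIoo, Finset.sum_mul]
        refine Finset.sum_congr rfl fun k _ => ?_
        ring
      rw [hcongr, intervalIntegral.integral_finset_sum (fun k _ => by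
        apply Continuous.intervalIntegrable; continuity)]
      have hint : ∀ k : ℕ, (∫ v in (n:ℝ)..u, (v - n)^k) = (u - n)^(k+1) / (k+1) := by
        intro k
        rw [show (∫ v in (n:ℝ)..u, (v - (n:ℝ))^k)
            = ∫ v in (n:ℝ)..u, (fun x => x ^ k) (v - (n:ℝ)) from rfl,
          intervalIntegral.integral_comp_sub_right (fun x => x ^ k) (n:ℝ), sub_self,
          integral_pow]
        simp
      have hterm : ∀ k ∈ Finset.range (I.length + 1),
          (∫ v in (n:ℝ)..u, (J N V (I.drop k) n * ((I.take k).map (V n)).prod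
              / (Nat.factorial k)) * (v - n)^k * V n i)
          = J N V ((i :: I).drop (k+1)) n * (((i :: I).take (k+1)).map (V n)).prod
              * (u - n)^(k+1) / (Nat.factorial (k+1)) := by
        intro k _
        rw [intervalIntegral.integral_mul_const, intervalIntegral.integral_const_mul, hint]
        simp only [List.drop_succ_cons, List.take_succ_cons, List.map_cons, List.prod_cons]
        rw [Nat.factorial_succ]
        have h1 : (Nat.factorial k : ℝ) ≠ 0 := Nat.cast_ne_zero.2 (Nat.factorial_ne_zero k)
        have h2 : ((k:ℝ) + 1) ≠ 0 := by positivity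
        push_cast
        field_simp
      rw [Finset.sum_congr rfl hterm]
      simp only [List.length_cons]
      rw [Finset.sum_range_succ' (fun k => J N V ((i :: I).drop k) n
        * (((i :: I).take k).map (V n)).prod * (u - (n:ℝ))^k / (Nat.factorial k)) (I.length + 1)]
      simp only [List.drop_zero, List.take_zero, List.map_nil, List.prod_nil, pow_zero,
        Nat.factorial_zero, Nat.cast_one, mul_one, div_one]
      ring

lemma J_node {N : ℕ} {V : ℕ → Fin 2 → ℝ} (I : List (Fin 2)) {n : ℕ} (hn : n < N) :
    J N V I ((n:ℝ)+1) = ∑ k ∈ Finset.range (I.length + 1),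
      J N V (I.drop k) n * ((I.take k).map (V n)).prod / (Nat.factorial k) := by
  rw [J_segment I hn (Set.right_mem_Icc.2 (by linarith))]
  refine Finset.sum_congr rfl fun k _ => ?_
  simp

lemma deriv_seg {N : ℕ} {V : ℕ → Fin 2 → ℝ} {X : ℝ → Fin 2 → ℝ}
    (hseg : ∀ n < N, ∀ s ∈ Set.Icc (n:ℝ) ((n:ℝ)+1), ∀ i, X s i = X n i + (s - n) * V n i)
    {n : ℕ} (hn : n < N) (i : Fin 2) {u : ℝ} (hu : u ∈ Set.Ioo (n:ℝ) ((n:ℝ)+1)) :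
    deriv (fun s => X s i) u = V n i := by
  have hev : (fun s => X s i) =ᶠ[nhds u] (fun s => X (n:ℝ) i + (s - (n:ℝ)) * V n i) :=
    Filter.eventuallyEq_of_mem (Ioo_mem_nhds hu.1 hu.2)
      (fun s hs => hseg n hn s (Set.Ioo_subset_Icc_self hs) i)
  rw [hev.deriv_eq]
  have h : HasDerivAt (fun s => X (n:ℝ) i + (s - (n:ℝ)) * V n i) (V n i) u := by
    simpa using (((hasDerivAt_id u).sub_const (n:ℝ)).mul_const (V n i)).const_add (X (n:ℝ) i)
  exact h.deriv

lemma J_eq_iterInt {N : ℕ} {V : ℕ → Fin 2 → ℝ} {X : ℝ → Fin 2 → ℝ}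
    (hseg : ∀ n < N, ∀ s ∈ Set.Icc (n:ℝ) ((n:ℝ)+1), ∀ i, X s i = X n i + (s - n) * V n i) :
    ∀ (I : List (Fin 2)) {u : ℝ}, u ∈ Set.Icc (0:ℝ) (N:ℝ) → iterInt X 0 I u = J N V I u
  | [], u, hu => rfl
  | (i :: I), u, hu => by
      show (∫ v in (0:ℝ)..u, iterInt X 0 I v * deriv (fun s => X s i) v)
        = ∫ v in (0:ℝ)..u, J N V I v * W N V i v
      refine intervalIntegral.integral_congr_ae ?_
      have hgrid : ∀ᵐ v ∂(MeasureTheory.volume : Measure ℝ),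
          v ∉ Set.range ((↑) : ℕ → ℝ) := by
        exact MeasureTheory.measure_eq_zero_iff_ae_notMem.mp
          ((Set.countable_range _).measure_zero _)
      filter_upwards [hgrid] with v hv hv'
      have hIoc : v ∈ Set.Ioc (0:ℝ) u := by
        rwa [Set.uIoc_of_le hu.1] at hv'
      have hv0 : 0 < v := hIoc.1
      set nn := ⌊v⌋₊ with hnn
      have h1 : (nn:ℝ) ≤ v := Nat.floor_le hv0.le
      have h2 : v < (nn:ℝ) + 1 := Nat.lt_floor_add_one v
      have h1' : (nn:ℝ) < v := lt_of_le_of_ne h1 (fun h => hv ⟨nn, h⟩)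
      have hvN : v < (N:ℝ) := lt_of_le_of_ne (hIoc.2.trans hu.2) (fun h => hv ⟨N, h.symm⟩)
      have hnN : nn < N := by
        have := (Nat.floor_lt hv0.le).2 hvN
        exact this
      rw [J_eq_iterInt hseg I ⟨hv0.le, hIoc.2.trans hu.2⟩,
        deriv_seg hseg hnN i ⟨h1', h2⟩, W_eq hnN ⟨h1', h2⟩]

lemma bin (x y : ℝ) (a : ℕ) :
    ∑ k ∈ Finset.range (a+1),
      x^(a-k)/(Nat.factorial (a-k)) * (y^k / (Nat.factorial k))
    = (x+y)^a / (Nat.factorial a) := by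
  rw [add_pow, Finset.sum_div]
  rw [← Finset.sum_range_reflect (fun k => x^(a-k)/(Nat.factorial (a-k)) * (y^k / (Nat.factorial k))) (a+1)]
  refine Finset.sum_congr rfl fun k hk => ?_
  have hk' : k ≤ a := Nat.lt_succ_iff.mp (Finset.mem_range.mp hk)
  have h1 : a + 1 - 1 - k = a - k := by omega
  have h2 : a - (a - k) = k := by omega
  rw [h1, h2]
  have key : ((a.choose k : ℕ) : ℝ) * (Nat.factorial k) * (Nat.factorial (a-k))
      = (Nat.factorial a) := by
    exact_mod_cast congrArg (Nat.cast (R := ℝ)) (Nat.choose_mul_factorial_mul_factorial hk')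
  have f1 : (Nat.factorial k : ℝ) ≠ 0 := Nat.cast_ne_zero.2 (Nat.factorial_ne_zero k)
  have f2 : (Nat.factorial (a-k) : ℝ) ≠ 0 := Nat.cast_ne_zero.2 (Nat.factorial_ne_zero _)
  have f3 : (Nat.factorial a : ℝ) ≠ 0 := Nat.cast_ne_zero.2 (Nat.factorial_ne_zero a)
  field_simp
  rw [← key]
  ring

def rp (a : ℕ) : List (Fin 2) := List.replicate a 0
def hwd (s p : ℕ) : List (Fin 2) := rp s ++ 1 :: rp p
def kwd (s p : ℕ) : List (Fin 2) := 1 :: hwd s p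

lemma length_hwd (s p : ℕ) : (hwd s p).length = s + (p + 1) := by
  simp [hwd, rp]

lemma take_hwd_le {k s : ℕ} (p : ℕ) (hk : k ≤ s) : (hwd s p).take k = rp k := by
  have h1 : k - s = 0 := by omega
  simp [hwd, rp, List.take_append, List.take_replicate, h1,
    Nat.min_eq_left hk]

lemma drop_hwd_le {k s : ℕ} (p : ℕ) (hk : k ≤ s) : (hwd s p).drop k = hwd (s-k) p := by
  have h1 : k - s = 0 := by omega
  simp [hwd, rp, List.drop_append, List.drop_replicate, h1]

lemma take_hwd_gt {j s : ℕ} (p : ℕ) (hj : j ≤ p) :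
    (hwd s p).take (s+1+j) = rp s ++ 1 :: rp j := by
  have h1 : s + 1 + j - s = j + 1 := by omega
  simp [hwd, rp, List.take_append, List.take_replicate, h1,
    Nat.min_eq_right (by omega : s ≤ s + 1 + j), Nat.min_eq_left hj]

lemma drop_hwd_gt {j s : ℕ} (p : ℕ) (hj : j ≤ p) :
    (hwd s p).drop (s+1+j) = rp (p - j) := by
  have h1 : s + 1 + j - s = j + 1 := by omega
  have h2 : s - (s + 1 + j) = 0 := by omega
  simp [hwd, rp, List.drop_append, List.drop_replicate, h1, h2]

lemma prodmap (g : Fin 2 → ℝ) (a b : ℕ) :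
    ((rp a ++ 1 :: rp b).map g).prod = g 0 ^ a * (g 1 * g 0 ^ b) := by
  simp [rp]

lemma prodmap_rp (g : Fin 2 → ℝ) (a : ℕ) : ((rp a).map g).prod = g 0 ^ a := by
  simp [rp]

noncomputable def Vm (τ dd : ℕ → ℝ) : ℕ → Fin 2 → ℝ := fun n =>
  if n % 2 = 0 then ![0, dd (n/2)] else ![τ (n/2+1) - τ (n/2), 0]

noncomputable def Hf (dd τ : ℕ → ℝ) (ι : ℕ) (τn : ℝ) (s p : ℕ) : ℝ :=
  ∑ i ∈ Finset.range ι,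
    dd i * (τ i ^ p / (Nat.factorial p)) * ((τn - τ i)^s / (Nat.factorial s))

noncomputable def Kf (dd τ : ℕ → ℝ) (ι : ℕ) (s p : ℕ) : ℝ :=
  (∑ j ∈ Finset.range ι, ∑ i ∈ Finset.range j,
    dd i * dd j * (τ i ^ p / (Nat.factorial p)) * ((τ j - τ i)^s / (Nat.factorial s)))
  + (if s = 0 then (∑ i ∈ Finset.range ι, dd i^2 * (τ i ^ p / (Nat.factorial p))) / 2 else 0)

lemma hwd_cons (s p : ℕ) : ∃ i I, hwd s p = i :: I := by
  cases s with
  | zero => exact ⟨1, rp p, rfl⟩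
  | succ b => exact ⟨0, rp b ++ 1 :: rp p, rfl⟩

lemma J_values {m : ℕ} (τ dd : ℕ → ℝ) (hτ0 : τ 0 = 0) :
    ∀ n, n ≤ 2*m - 1 →
    (∀ a, J (2*m-1) (Vm τ dd) (rp a) (n:ℝ) = τ (n/2) ^ a / (Nat.factorial a)) ∧
    (∀ s p, J (2*m-1) (Vm τ dd) (hwd s p) (n:ℝ) = Hf dd τ ((n+1)/2) (τ (n/2)) s p) ∧
    (∀ s p, J (2*m-1) (Vm τ dd) (kwd s p) (n:ℝ) = Kf dd τ ((n+1)/2) s p) := by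
  intro n
  induction n with
  | zero =>
    intro _
    have hJ0 : ∀ (i : Fin 2) (I : List (Fin 2)), J (2*m-1) (Vm τ dd) (i :: I) ((0:ℕ):ℝ) = 0 := by
      intro i I
      show (∫ v in (0:ℝ)..((0:ℕ):ℝ), J (2*m-1) (Vm τ dd) I v * W (2*m-1) (Vm τ dd) i v) = 0
      norm_num
    refine ⟨?_, ?_, ?_⟩
    · intro a
      cases a with
      | zero => show J _ _ [] _ = _; simp [J]
      | succ b =>
        rw [show rp (b+1) = 0 :: rp b from rfl, hJ0]
        rw [show (0:ℕ)/2 = 0 from rfl, hτ0]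
        rw [zero_pow (Nat.succ_ne_zero b)]
        simp
    · intro s p
      obtain ⟨i, I, hI⟩ := hwd_cons s p
      rw [hI, hJ0]
      simp [Hf]
    · intro s p
      rw [show kwd s p = 1 :: hwd s p from rfl, hJ0]
      simp [Kf]
  | succ n IH =>
    intro hn1
    have hn : n < 2*m-1 := by omega
    obtain ⟨IH1, IH2, IH3⟩ := IH (by omega)
    have hpush : ((n+1 : ℕ) : ℝ) = (n:ℝ) + 1 := by push_cast; ring
    have hlrp : ∀ a : ℕ, (rp a).length = a := fun a => by simp [rp]
    have hdrp : ∀ a k : ℕ, (rp a).drop k = rp (a - k) := fun a k => by simp [rp]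
    have htrp : ∀ a k : ℕ, (rp a).take k = rp (min k a) := fun a k => by
      simp [rp, List.take_replicate]
    rcases Nat.mod_two_eq_zero_or_one n with hpar | hpar
    · -- even segment
      set c := n / 2 with hc
      have hV0 : Vm τ dd n 0 = 0 := by simp [Vm, hpar]
      have hV1 : Vm τ dd n 1 = dd c := by simp [Vm, hpar]; rfl
      have e1 : (n+1)/2 = c := by omega
      have e2 : (n+1+1)/2 = c+1 := by omega
      refine ⟨?_, ?_, ?_⟩
      · -- replicate words
        intro a
        rw [hpush, J_node (rp a) hn, hlrp, e1]
        rw [Finset.sum_eq_single 0]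
        · simp only [List.drop_zero, List.take_zero, List.map_nil, List.prod_nil, mul_one,
            Nat.factorial_zero, Nat.cast_one, div_one, pow_zero]
          rw [IH1 a]
        · intro k hk hk0
          have hka : k ≤ a := Nat.lt_succ_iff.mp (Finset.mem_range.mp hk)
          rw [htrp, prodmap_rp, hV0, zero_pow (by omega : min k a ≠ 0)]
          simp
        · intro h
          exact absurd (Finset.mem_range.2 (Nat.succ_pos a)) h
      · -- hwd words
        intro s p
        rw [hpush, J_node (hwd s p) hn, length_hwd,
          show s + (p+1) + 1 = (s+1) + (p+1) from by ring, Finset.sum_range_add]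
        have hfirst : (∑ k ∈ Finset.range (s+1),
            J (2*m-1) (Vm τ dd) ((hwd s p).drop k) (n:ℝ)
              * (((hwd s p).take k).map (Vm τ dd n)).prod / (Nat.factorial k))
            = Hf dd τ c (τ c) s p := by
          rw [Finset.sum_eq_single 0]
          · simp only [List.drop_zero, List.take_zero, List.map_nil, List.prod_nil, mul_one,
              Nat.factorial_zero, Nat.cast_one, div_one]
            rw [IH2 s p, e1]
          · intro k hk hk0
            have hks : k ≤ s := Nat.lt_succ_iff.mp (Finset.mem_range.mp hk)
            rw [take_hwd_le p hks, prodmap_rp, hV0, zero_pow hk0]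
            simp
          · intro h
            exact absurd (Finset.mem_range.2 (Nat.succ_pos s)) h
        have hsecond : (∑ j ∈ Finset.range (p+1),
            J (2*m-1) (Vm τ dd) ((hwd s p).drop (s+1+j)) (n:ℝ)
              * (((hwd s p).take (s+1+j)).map (Vm τ dd n)).prod / (Nat.factorial (s+1+j)))
            = if s = 0 then dd c * (τ c ^ p / (Nat.factorial p)) else 0 := by
          by_cases hs : s = 0
          · subst hs
            rw [if_pos rfl, Finset.sum_eq_single 0]
            · rw [drop_hwd_gt p (Nat.zero_le p), take_hwd_gt p (Nat.zero_le p), prodmap,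
                hV0, hV1, IH1]
              norm_num
              ring
            · intro j hj hj0
              have hjp : j ≤ p := Nat.lt_succ_iff.mp (Finset.mem_range.mp hj)
              rw [take_hwd_gt p hjp, prodmap, hV0, hV1, zero_pow hj0]
              simp
            · intro h
              exact absurd (Finset.mem_range.2 (Nat.succ_pos p)) h
          · rw [if_neg hs]
            refine Finset.sum_eq_zero fun j hj => ?_
            have hjp : j ≤ p := Nat.lt_succ_iff.mp (Finset.mem_range.mp hj)
            rw [take_hwd_gt p hjp, prodmap, hV0, zero_pow hs]
            simp
        have hHstep : Hf dd τ (c+1) (τ c) s p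
            = Hf dd τ c (τ c) s p
              + (if s = 0 then dd c * (τ c ^ p / (Nat.factorial p)) else 0) := by
          rw [Hf, Finset.sum_range_succ, ← Hf, sub_self, zero_pow_eq]
          by_cases hs : s = 0
          · subst hs
            norm_num
          · rw [if_neg hs, if_neg hs]
            simp
        rw [hfirst, hsecond, e2, e1, hHstep]
      · -- kwd words
        intro s p
        rw [hpush, J_node (kwd s p) hn,
          show (kwd s p).length = (s + (p+1)) + 1 from by simp [kwd, length_hwd]]
        rw [Finset.sum_range_succ' (fun k =>
          J (2*m-1) (Vm τ dd) ((kwd s p).drop k) (n:ℝ)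
            * (((kwd s p).take k).map (Vm τ dd n)).prod / (Nat.factorial k)) ((s + (p+1)) + 1)]
        have hzero : J (2*m-1) (Vm τ dd) ((kwd s p).drop 0) (n:ℝ)
            * (((kwd s p).take 0).map (Vm τ dd n)).prod / (Nat.factorial 0)
            = Kf dd τ c s p := by
          simp only [List.drop_zero, List.take_zero, List.map_nil, List.prod_nil, mul_one,
            Nat.factorial_zero, Nat.cast_one, div_one]
          rw [IH3 s p, e1]
        have hdropk : ∀ k : ℕ, (kwd s p).drop (k+1) = (hwd s p).drop k := fun k => rfl
        have htakek : ∀ k : ℕ, (kwd s p).take (k+1) = 1 :: (hwd s p).take k := fun k => rfl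
        have hrest : (∑ k ∈ Finset.range ((s+1) + (p+1)),
            J (2*m-1) (Vm τ dd) ((kwd s p).drop (k+1)) (n:ℝ)
              * (((kwd s p).take (k+1)).map (Vm τ dd n)).prod / (Nat.factorial (k+1)))
            = dd c * Hf dd τ c (τ c) s p
              + (if s = 0 then dd c^2 * (τ c ^ p / (Nat.factorial p)) / 2 else 0) := by
          rw [Finset.sum_range_add]
          have hp1 : (∑ k ∈ Finset.range (s+1),
              J (2*m-1) (Vm τ dd) ((kwd s p).drop (k+1)) (n:ℝ)
                * (((kwd s p).take (k+1)).map (Vm τ dd n)).prod / (Nat.factorial (k+1)))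
              = dd c * Hf dd τ c (τ c) s p := by
            rw [Finset.sum_eq_single 0]
            · rw [hdropk, htakek, List.drop_zero, List.take_zero, List.map_cons, List.map_nil,
                List.prod_cons, List.prod_nil, hV1, IH2 s p, e1]
              norm_num
              ring
            · intro k hk hk0
              have hks : k ≤ s := Nat.lt_succ_iff.mp (Finset.mem_range.mp hk)
              rw [hdropk, htakek, take_hwd_le p hks, List.map_cons,
                List.prod_cons, prodmap_rp, hV0, zero_pow hk0]
              simp
            · intro h
              exact absurd (Finset.mem_range.2 (Nat.succ_pos s)) h
          have hp2 : (∑ j ∈ Finset.range (p+1),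
              J (2*m-1) (Vm τ dd) ((kwd s p).drop ((s+1+j)+1)) (n:ℝ)
                * (((kwd s p).take ((s+1+j)+1)).map (Vm τ dd n)).prod
                  / (Nat.factorial ((s+1+j)+1)))
              = if s = 0 then dd c^2 * (τ c ^ p / (Nat.factorial p)) / 2 else 0 := by
            by_cases hs : s = 0
            · subst hs
              rw [if_pos rfl, Finset.sum_eq_single 0]
              · rw [hdropk, htakek, drop_hwd_gt p (Nat.zero_le p),
                  take_hwd_gt p (Nat.zero_le p), List.map_cons, List.prod_cons, prodmap,
                  hV0, hV1, IH1]
                norm_num [Nat.factorial]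
                ring
              · intro j hj hj0
                have hjp : j ≤ p := Nat.lt_succ_iff.mp (Finset.mem_range.mp hj)
                rw [hdropk, htakek, take_hwd_gt p hjp, List.map_cons,
                  List.prod_cons, prodmap, hV0, hV1, zero_pow hj0]
                simp
              · intro h
                exact absurd (Finset.mem_range.2 (Nat.succ_pos p)) h
            · rw [if_neg hs]
              refine Finset.sum_eq_zero fun j hj => ?_
              have hjp : j ≤ p := Nat.lt_succ_iff.mp (Finset.mem_range.mp hj)
              rw [hdropk, htakek, take_hwd_gt p hjp, List.map_cons,
                List.prod_cons, prodmap, hV0, zero_pow hs]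
              simp
          rw [hp1, hp2]
        have hKstep : Kf dd τ (c+1) s p
            = Kf dd τ c s p + (dd c * Hf dd τ c (τ c) s p
              + (if s = 0 then dd c^2 * (τ c ^ p / (Nat.factorial p)) / 2 else 0)) := by
          rw [Kf, Kf, Finset.sum_range_succ]
          have hin : (∑ i ∈ Finset.range c,
              dd i * dd c * (τ i ^ p / (Nat.factorial p : ℝ))
                * ((τ c - τ i)^s / (Nat.factorial s : ℝ)))
              = dd c * Hf dd τ c (τ c) s p := by
            rw [Hf, Finset.mul_sum]
            exact Finset.sum_congr rfl fun i _ => by ring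
          rw [hin]
          by_cases hs : s = 0
          · simp only [if_pos hs]
            rw [Finset.sum_range_succ]
            ring
          · simp only [if_neg hs]
            ring
        rw [show s + (p+1) + 1 = (s+1) + (p+1) from by ring, hrest, hzero, e2, hKstep]
        ring
    · -- odd segment
      set c := n / 2 with hc
      have hV0 : Vm τ dd n 0 = τ (c+1) - τ c := by simp [Vm, hpar]; rfl
      have hV1 : Vm τ dd n 1 = 0 := by simp [Vm, hpar]
      have e1 : (n+1)/2 = c+1 := by omega
      have e2 : (n+1+1)/2 = c+1 := by omega
      refine ⟨?_, ?_, ?_⟩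
      · -- rp
        intro a
        rw [hpush, J_node (rp a) hn, hlrp, e1]
        have hterm : ∀ k ∈ Finset.range (a+1),
            J (2*m-1) (Vm τ dd) ((rp a).drop k) (n:ℝ)
              * (((rp a).take k).map (Vm τ dd n)).prod / (Nat.factorial k)
            = τ c ^ (a-k) / (Nat.factorial (a-k)) * ((τ (c+1) - τ c)^k / (Nat.factorial k)) := by
          intro k hk
          have hka : k ≤ a := Nat.lt_succ_iff.mp (Finset.mem_range.mp hk)
          rw [hdrp, htrp, prodmap_rp, hV0, IH1, Nat.min_eq_left hka, mul_div_assoc]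
        rw [Finset.sum_congr rfl hterm, bin]
        rw [show τ c + (τ (c+1) - τ c) = τ (c+1) from by ring]
      · -- hwd
        intro s p
        rw [hpush, J_node (hwd s p) hn, length_hwd,
          show s + (p+1) + 1 = (s+1) + (p+1) from by ring, Finset.sum_range_add]
        have hsecond : (∑ j ∈ Finset.range (p+1),
            J (2*m-1) (Vm τ dd) ((hwd s p).drop (s+1+j)) (n:ℝ)
              * (((hwd s p).take (s+1+j)).map (Vm τ dd n)).prod / (Nat.factorial (s+1+j)))
            = 0 := by
          refine Finset.sum_eq_zero fun j hj => ?_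
          have hjp : j ≤ p := Nat.lt_succ_iff.mp (Finset.mem_range.mp hj)
          rw [take_hwd_gt p hjp, prodmap, hV1]
          simp
        have hfirst : (∑ k ∈ Finset.range (s+1),
            J (2*m-1) (Vm τ dd) ((hwd s p).drop k) (n:ℝ)
              * (((hwd s p).take k).map (Vm τ dd n)).prod / (Nat.factorial k))
            = ∑ k ∈ Finset.range (s+1),
                Hf dd τ (c+1) (τ c) (s-k) p * ((τ (c+1) - τ c)^k / (Nat.factorial k)) := by
          refine Finset.sum_congr rfl fun k hk => ?_
          have hks : k ≤ s := Nat.lt_succ_iff.mp (Finset.mem_range.mp hk)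
          rw [drop_hwd_le p hks, take_hwd_le p hks, prodmap_rp, hV0, IH2, e1, mul_div_assoc]
        have hsw : (∑ k ∈ Finset.range (s+1),
            Hf dd τ (c+1) (τ c) (s-k) p * ((τ (c+1) - τ c)^k / (Nat.factorial k)))
            = Hf dd τ (c+1) (τ (c+1)) s p := by
          simp only [Hf, Finset.sum_mul]
          rw [Finset.sum_comm]
          refine Finset.sum_congr rfl fun i _ => ?_
          have hb := bin (τ c - τ i) (τ (c+1) - τ c) s
          rw [show τ c - τ i + (τ (c+1) - τ c) = τ (c+1) - τ i from by ring] at hb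
          rw [← hb, Finset.mul_sum]
          exact Finset.sum_congr rfl fun k _ => by ring
        rw [hfirst, hsecond, add_zero, hsw, e2, e1]
      · -- kwd
        intro s p
        rw [hpush, J_node (kwd s p) hn,
          show (kwd s p).length = (s + (p+1)) + 1 from by simp [kwd, length_hwd]]
        rw [Finset.sum_range_succ' (fun k =>
          J (2*m-1) (Vm τ dd) ((kwd s p).drop k) (n:ℝ)
            * (((kwd s p).take k).map (Vm τ dd n)).prod / (Nat.factorial k)) ((s + (p+1)) + 1)]
        have htakek : ∀ k : ℕ, (kwd s p).take (k+1) = 1 :: (hwd s p).take k := fun k => rfl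
        have hrest : (∑ k ∈ Finset.range ((s + (p+1)) + 1),
            J (2*m-1) (Vm τ dd) ((kwd s p).drop (k+1)) (n:ℝ)
              * (((kwd s p).take (k+1)).map (Vm τ dd n)).prod / (Nat.factorial (k+1)))
            = 0 := by
          refine Finset.sum_eq_zero fun k hk => ?_
          rw [htakek, List.map_cons, List.prod_cons, hV1]
          simp
        rw [hrest, e2]
        simp only [List.drop_zero, List.take_zero, List.map_nil, List.prod_nil, mul_one,
          Nat.factorial_zero, Nat.cast_one, div_one, zero_add]
        rw [IH3 s p, e1]

lemma Sig_empty {d : ℕ} (X : ℝ → Fin d → ℝ) (a b : ℝ) : Sig X a b [] = 1 := rfl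

lemma Sig_values {m : ℕ} (τ dd : ℕ → ℝ) (hτ0 : τ 0 = 0)
    (X : ℝ → Fin 2 → ℝ)
    (hseg : ∀ n < 2*m-1, ∀ s ∈ Set.Icc (n:ℝ) ((n:ℝ)+1), ∀ i,
      X s i = X n i + (s - n) * Vm τ dd n i) :
    (∀ p, Sig X 0 ((2*m-1 : ℕ) : ℝ) ((hwd 0 p).reverse)
        = ∑ i ∈ Finset.range m, dd i * (τ i ^ p / (Nat.factorial p)))
    ∧ (∀ s p, Sig X 0 ((2*m-1 : ℕ) : ℝ) ((kwd s p).reverse) = Kf dd τ m s p) := by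
  have hNn : ((2*m-1 : ℕ) : ℝ) ∈ Set.Icc (0:ℝ) (((2*m-1:ℕ)):ℝ) :=
    ⟨Nat.cast_nonneg _, le_refl _⟩
  obtain ⟨hA, hH, hK⟩ := J_values (m := m) τ dd hτ0 (2*m-1) le_rfl
  have hrev : ∀ l : List (Fin 2), Sig X 0 ((2*m-1:ℕ):ℝ) l.reverse
      = iterInt X 0 l ((2*m-1:ℕ):ℝ) := by
    intro l
    rw [Sig, sigCoord, List.reverse_reverse]
  by_cases hm : 1 ≤ m
  · have hι : (2*m-1+1)/2 = m := by omega
    constructor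
    · intro p
      rw [hrev, J_eq_iterInt hseg _ hNn, hH 0 p, hι, Hf]
      refine Finset.sum_congr rfl fun i _ => ?_
      norm_num
    · intro s p
      rw [hrev, J_eq_iterInt hseg _ hNn, hK s p, hι]
  · have hm0 : m = 0 := by omega
    subst hm0
    constructor
    · intro p
      rw [hrev, J_eq_iterInt hseg _ hNn, hH 0 p]
      simp [Hf]
    · intro s p
      rw [hrev, J_eq_iterInt hseg _ hNn, hK s p]

/-! ### Linear span of signature coordinates -/

lemma formEval_single {d : ℕ} (w : List (Fin d)) (c : ℝ) (x : List (Fin d) → ℝ) :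
    formEval (Finsupp.single w c) x = c * x w :=
  Finsupp.sum_single_index (by simp)

lemma formEval_add {d : ℕ} (f g : List (Fin d) →₀ ℝ) (x : List (Fin d) → ℝ) :
    formEval (f + g) x = formEval f x + formEval g x :=
  Finsupp.sum_add_index' (by simp) (fun w c1 c2 => add_mul c1 c2 (x w))

lemma formEval_smul {d : ℕ} (c : ℝ) (f : List (Fin d) →₀ ℝ) (x : List (Fin d) → ℝ) :
    formEval (c • f) x = c * formEval f x := by
  rw [formEval, Finsupp.sum_smul_index' (by simp), formEval, Finsupp.mul_sum]
  refine Finset.sum_congr rfl fun w _ => ?_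
  simp [smul_eq_mul]
  ring

section InSSection

variable {Ω : Type*} (Y : Ω → (List (Fin 2) → ℝ))

def InS (g : Ω → ℝ) : Prop := ∃ f : List (Fin 2) →₀ ℝ, ∀ ω, g ω = formEval f (Y ω)

variable {Y}

lemma InS_congr {g1 g2 : Ω → ℝ} (h : ∀ ω, g1 ω = g2 ω) (hg : InS Y g1) : InS Y g2 := by
  obtain ⟨f, hf⟩ := hg
  exact ⟨f, fun ω => (h ω).symm.trans (hf ω)⟩

lemma InS_word (w : List (Fin 2)) : InS Y (fun ω => Y ω w) :=
  ⟨Finsupp.single w 1, fun ω => by rw [formEval_single]; ring⟩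

lemma InS_zero : InS Y (fun _ => 0) := ⟨0, fun ω => by simp [formEval]⟩

lemma InS_add {g1 g2 : Ω → ℝ} (h1 : InS Y g1) (h2 : InS Y g2) :
    InS Y (fun ω => g1 ω + g2 ω) := by
  obtain ⟨f1, hf1⟩ := h1
  obtain ⟨f2, hf2⟩ := h2
  exact ⟨f1 + f2, fun ω => by rw [formEval_add, ← hf1, ← hf2]⟩

lemma InS_smul (c : ℝ) {g : Ω → ℝ} (h : InS Y g) : InS Y (fun ω => c * g ω) := by
  obtain ⟨f, hf⟩ := h
  exact ⟨c • f, fun ω => by rw [formEval_smul, ← hf]⟩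

lemma InS_sum {ι : Type*} (s : Finset ι) (F : ι → Ω → ℝ)
    (h : ∀ i ∈ s, InS Y (F i)) : InS Y (fun ω => ∑ i ∈ s, F i ω) := by
  classical
  induction s using Finset.induction_on with
  | empty => exact InS_congr (fun ω => by simp) InS_zero
  | @insert a s' hnotmem ih =>
    refine InS_congr (fun ω => ?_) (InS_add (h a (Finset.mem_insert_self a s'))
      (ih fun i hi => h i (Finset.mem_insert_of_mem hi)))
    rw [Finset.sum_insert hnotmem]

end InSSection

section SpanSection

variable {Ω : Type*} {Y : Ω → (List (Fin 2) → ℝ)} {m : ℕ} {τ : ℕ → ℝ} {D : Ω → ℕ → ℝ}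
  (hL : ∀ ω p, Y ω ((hwd 0 p).reverse)
    = ∑ i ∈ Finset.range m, D ω i * (τ i ^ p / (Nat.factorial p)))
  (hK : ∀ ω s p, Y ω ((kwd s p).reverse) = Kf (D ω) τ m s p)

include hL in
lemma InS_lin (P : Polynomial ℝ) :
    InS Y (fun ω => ∑ i ∈ Finset.range m, Polynomial.eval (τ i) P * D ω i) := by
  induction P using Polynomial.induction_on' with
  | add p q hp hq =>
    refine InS_congr (fun ω => ?_) (InS_add hp hq)
    rw [← Finset.sum_add_distrib]
    refine Finset.sum_congr rfl fun i _ => ?_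
    rw [Polynomial.eval_add]
    ring
  | monomial n a =>
    refine InS_congr (fun ω => ?_) (InS_smul (a * (Nat.factorial n))
      (InS_word (Y := Y) ((hwd 0 n).reverse)))
    rw [hL ω n, Finset.mul_sum]
    refine Finset.sum_congr rfl fun i _ => ?_
    rw [Polynomial.eval_monomial]
    have : (Nat.factorial n : ℝ) ≠ 0 := Nat.cast_ne_zero.2 (Nat.factorial_ne_zero n)
    field_simp

include hK in
lemma InS_quad (P Q : Polynomial ℝ) :
    InS Y (fun ω =>
      (∑ j ∈ Finset.range m, ∑ i ∈ Finset.range j,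
        Polynomial.eval (τ i) P * Polynomial.eval (τ j - τ i) Q * (D ω i * D ω j))
      + Polynomial.eval 0 Q
          * (∑ i ∈ Finset.range m, Polynomial.eval (τ i) P * (D ω i)^2) / 2) := by
  induction P using Polynomial.induction_on' with
  | add p q hp hq =>
    refine InS_congr (fun ω => ?_) (InS_add hp hq)
    simp only [Polynomial.eval_add, add_mul, mul_add, Finset.sum_add_distrib, add_div]
    ring
  | monomial n a =>
    induction Q using Polynomial.induction_on' with
    | add q1 q2 hq1 hq2 =>
      refine InS_congr (fun ω => ?_) (InS_add hq1 hq2)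
      simp only [Polynomial.eval_add, add_mul, mul_add, Finset.sum_add_distrib, add_div]
      ring
    | monomial s b =>
      refine InS_congr (fun ω => ?_) (InS_smul ((a*b) * ((Nat.factorial n) * (Nat.factorial s)))
        (InS_word (Y := Y) ((kwd s n).reverse)))
      rw [hK ω s n, Kf]
      have hfn : (Nat.factorial n : ℝ) ≠ 0 := Nat.cast_ne_zero.2 (Nat.factorial_ne_zero n)
      have hfs : (Nat.factorial s : ℝ) ≠ 0 := Nat.cast_ne_zero.2 (Nat.factorial_ne_zero s)
      rw [mul_add, Finset.mul_sum]
      congr 1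
      · refine Finset.sum_congr rfl fun j _ => ?_
        rw [Finset.mul_sum]
        refine Finset.sum_congr rfl fun i _ => ?_
        simp only [Polynomial.eval_monomial]
        field_simp
      · by_cases hs : s = 0
        · subst hs
          rw [if_pos rfl]
          have hS : (∑ i ∈ Finset.range m,
              Polynomial.eval (τ i) ((Polynomial.monomial n) a) * (D ω i)^2)
              = (a * (Nat.factorial n)) * ∑ i ∈ Finset.range m,
                  (D ω i)^2 * (τ i ^ n / (Nat.factorial n)) := by
            rw [Finset.mul_sum]
            refine Finset.sum_congr rfl fun i _ => ?_
            simp only [Polynomial.eval_monomial]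
            field_simp
          rw [hS]
          simp only [Polynomial.eval_monomial, pow_zero, Nat.factorial_zero, Nat.cast_one]
          ring
        · rw [if_neg hs]
          simp only [Polynomial.eval_monomial, zero_pow hs]
          ring

include hL in
lemma InS_D (hτinj : Set.InjOn τ (Finset.range m)) {i0 : ℕ} (hi0 : i0 < m) :
    InS Y (fun ω => D ω i0) := by
  classical
  refine InS_congr (fun ω => ?_) (InS_lin hL (Lagrange.basis (Finset.range m) τ i0))
  rw [Finset.sum_eq_single i0]
  · rw [Lagrange.eval_basis_self hτinj (Finset.mem_range.2 hi0), one_mul]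
  · intro i hi hne
    rw [Lagrange.eval_basis_of_ne (fun h => hne h.symm) hi, zero_mul]
  · intro h
    exact absurd (Finset.mem_range.2 hi0) h

section NuSection

variable {i0 : ℕ} (hi0 : i0 < m) (hτinj : Set.InjOn τ (Finset.range m))

private def nuf (τ : ℕ → ℝ) (i0 : ℕ) : ℕ → ℝ := fun j => if j = i0 then 0 else τ j - τ i0

include hτinj hi0 in
lemma nuf_inj : Set.InjOn (nuf τ i0) (Finset.Ico i0 m) := by
  intro x hx y hy hxy
  simp only [Finset.coe_Ico, Set.mem_Ico] at hx hy
  have hmem : ∀ z, z < m → z ∈ (Finset.range m : Set ℕ) := by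
    intro z hz
    simp [hz]
  by_cases hxi : x = i0 <;> by_cases hyi : y = i0
  · omega
  · exfalso
    simp only [nuf] at hxy; rw [if_pos hxi, if_neg hyi] at hxy
    have : τ y = τ i0 := by linarith
    exact hyi (hτinj (hmem y hy.2) (hmem i0 hi0) this)
  · exfalso
    simp only [nuf] at hxy; rw [if_neg hxi, if_pos hyi] at hxy
    have : τ x = τ i0 := by linarith
    exact hxi (hτinj (hmem x hx.2) (hmem i0 hi0) this)
  · simp only [nuf] at hxy; rw [if_neg hxi, if_neg hyi] at hxy
    have : τ x = τ y := by linarith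
    exact hτinj (hmem x hx.2) (hmem y hy.2) this

include hK hτinj in
lemma InS_DD_lt {j0 : ℕ} (hij : i0 < j0) (hj0 : j0 < m) :
    InS Y (fun ω => D ω i0 * D ω j0) := by
  classical
  have hi0m : i0 < m := lt_trans hij hj0
  have hνinj := nuf_inj hi0m hτinj
  set P := Lagrange.basis (Finset.range m) τ i0 with hP
  set QQ := Lagrange.basis (Finset.Ico i0 m) (nuf τ i0) j0 with hQQ
  have hPi : ∀ i, i < m → Polynomial.eval (τ i) P = if i = i0 then 1 else 0 := by
    intro i him
    by_cases h : i = i0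
    · subst h
      rw [if_pos rfl, Lagrange.eval_basis_self hτinj (Finset.mem_range.2 him)]
    · rw [if_neg h, Lagrange.eval_basis_of_ne (fun hh => h hh.symm) (Finset.mem_range.2 him)]
  have hQ0 : Polynomial.eval 0 QQ = 0 := by
    have h := Lagrange.eval_basis_of_ne (v := nuf τ i0) (show j0 ≠ i0 by omega)
      (Finset.mem_Ico.2 ⟨le_refl _, hi0m⟩)
    rwa [show nuf τ i0 i0 = 0 from by simp [nuf]] at h
  have hQj : ∀ j, i0 < j → j < m → Polynomial.eval (τ j - τ i0) QQ
      = if j = j0 then 1 else 0 := by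
    intro j h1 h2
    rw [show τ j - τ i0 = nuf τ i0 j from by rw [nuf, if_neg (by omega)]]
    by_cases h : j = j0
    · subst h
      rw [if_pos rfl, Lagrange.eval_basis_self hνinj (Finset.mem_Ico.2 ⟨h1.le, h2⟩)]
    · rw [if_neg h, Lagrange.eval_basis_of_ne (fun hh => h hh.symm)
        (Finset.mem_Ico.2 ⟨h1.le, h2⟩)]
  refine InS_congr (fun ω => ?_) (InS_quad hK P QQ)
  rw [hQ0, zero_mul, zero_div, add_zero]
  rw [Finset.sum_eq_single j0]
  · rw [Finset.sum_eq_single i0]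
    · rw [hPi i0 hi0m, if_pos rfl, hQj j0 hij hj0, if_pos rfl]
      ring
    · intro i hi hne
      rw [hPi i (lt_trans (Finset.mem_range.mp hi) hj0), if_neg hne, zero_mul, zero_mul]
    · intro h
      exact absurd (Finset.mem_range.2 hij) h
  · intro j hj hne
    refine Finset.sum_eq_zero fun i hi => ?_
    have hjm : j < m := Finset.mem_range.mp hj
    have hij' : i < j := Finset.mem_range.mp hi
    by_cases h : i = i0
    · subst h
      rw [hQj j hij' hjm, if_neg hne, mul_zero, zero_mul]
    · rw [hPi i (lt_trans hij' hjm), if_neg h, zero_mul, zero_mul]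
  · intro h
    exact absurd (Finset.mem_range.2 hj0) h

include hK hτinj hi0 in
lemma InS_Dsq : InS Y (fun ω => D ω i0 * D ω i0) := by
  classical
  have hνinj := nuf_inj hi0 hτinj
  set P := Lagrange.basis (Finset.range m) τ i0 with hP
  set QQ := Polynomial.C (2:ℝ) * Lagrange.basis (Finset.Ico i0 m) (nuf τ i0) i0 with hQQ
  have hPi : ∀ i, i < m → Polynomial.eval (τ i) P = if i = i0 then 1 else 0 := by
    intro i him
    by_cases h : i = i0
    · subst h
      rw [if_pos rfl, Lagrange.eval_basis_self hτinj (Finset.mem_range.2 him)]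
    · rw [if_neg h, Lagrange.eval_basis_of_ne (fun hh => h hh.symm) (Finset.mem_range.2 him)]
  have hQ0 : Polynomial.eval 0 QQ = 2 := by
    have h := Lagrange.eval_basis_self hνinj (Finset.mem_Ico.2 (⟨le_refl _, hi0⟩ :
      i0 ≤ i0 ∧ i0 < m))
    rw [show nuf τ i0 i0 = 0 from by simp [nuf]] at h
    rw [hQQ, Polynomial.eval_mul, Polynomial.eval_C, h]
    norm_num
  have hQj : ∀ j, i0 < j → j < m → Polynomial.eval (τ j - τ i0) QQ = 0 := by
    intro j h1 h2
    rw [hQQ, Polynomial.eval_mul, Polynomial.eval_C,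
      show τ j - τ i0 = nuf τ i0 j from by rw [nuf, if_neg (by omega)],
      Lagrange.eval_basis_of_ne (by omega) (Finset.mem_Ico.2 ⟨h1.le, h2⟩)]
    norm_num
  refine InS_congr (fun ω => ?_) (InS_quad hK P QQ)
  rw [hQ0]
  have hoff : (∑ j ∈ Finset.range m, ∑ i ∈ Finset.range j,
      Polynomial.eval (τ i) P * Polynomial.eval (τ j - τ i) QQ * (D ω i * D ω j)) = 0 := by
    refine Finset.sum_eq_zero fun j hj => Finset.sum_eq_zero fun i hi => ?_
    have hjm : j < m := Finset.mem_range.mp hj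
    have hij' : i < j := Finset.mem_range.mp hi
    by_cases h : i = i0
    · subst h
      rw [hQj j hij' hjm, mul_zero, zero_mul]
    · rw [hPi i (lt_trans hij' hjm), if_neg h, zero_mul, zero_mul]
  rw [hoff, zero_add]
  rw [Finset.sum_eq_single i0]
  · rw [hPi i0 hi0, if_pos rfl, one_mul]
    ring
  · intro i hi hne
    rw [hPi i (Finset.mem_range.mp hi), if_neg hne, zero_mul]
  · intro h
    exact absurd (Finset.mem_range.2 hi0) h

end NuSection

include hK in
lemma InS_DD (hτinj : Set.InjOn τ (Finset.range m)) {i0 j0 : ℕ}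
    (hi0 : i0 < m) (hj0 : j0 < m) : InS Y (fun ω => D ω i0 * D ω j0) := by
  rcases lt_trichotomy i0 j0 with h | h | h
  · exact InS_DD_lt hK hτinj h hj0
  · subst h
    exact InS_Dsq (hK := hK) (hi0 := hi0) (hτinj := hτinj)
  · exact InS_congr (fun ω => mul_comm _ _) (InS_DD_lt hK hτinj h hi0)

end SpanSection

section ProbSection

open MeasureTheory ProbabilityTheory

variable {Ω : Type*} {m mΩ : MeasurableSpace Ω} {μ : Measure Ω} [IsProbabilityMeasure μ]
  {A B z : Ω → ℝ}

lemma int_marginals (hm : m ≤ mΩ)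
    (hA : StronglyMeasurable[m] A) (hB : StronglyMeasurable[m] B)
    (hz : ProbabilityTheory.Indep (MeasurableSpace.comap z inferInstance) m μ)
    (hzmeas : Measurable[mΩ] z)
    (hz1 : Integrable z μ) (hz2 : Integrable (fun ω => z ω ^ 2) μ)
    (hzmean : ∫ ω, z ω ∂μ = 0) (hzvar : ∫ ω, z ω ^ 2 ∂μ = 1)
    (h1 : Integrable (fun ω => A ω + B ω * z ω) μ)
    (h2 : Integrable (fun ω => (A ω + B ω * z ω)^2) μ) :
    Integrable A μ ∧ Integrable (fun ω => A ω ^ 2) μ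
      ∧ Integrable (fun ω => B ω ^ 2) μ := by
  set φ : Ω → ℝ × ℝ := fun ω => (A ω, B ω) with hφ
  have hAm : Measurable[mΩ] A := (hA.mono hm).measurable
  have hBm : Measurable[mΩ] B := (hB.mono hm).measurable
  have hφm : Measurable[mΩ] φ := hAm.prodMk hBm
  have hφme : Measurable[m] φ := hA.measurable.prodMk hB.measurable
  have hφle : MeasurableSpace.comap φ inferInstance ≤ m := by
    intro s hs
    obtain ⟨t, ht, rfl⟩ := hs
    exact hφme ht
  have hIndepF : IndepFun φ z μ :=
    ProbabilityTheory.indep_of_indep_of_le_left hz.symm hφle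
  have hmap : μ.map (fun ω => (φ ω, z ω)) = (μ.map φ).prod (μ.map z) :=
    (ProbabilityTheory.indepFun_iff_map_prod_eq_prod_map_map hφm.aemeasurable
      hzmeas.aemeasurable).mp hIndepF
  set ν := μ.map z with hν
  haveI : IsProbabilityMeasure ν := Measure.isProbabilityMeasure_map hzmeas.aemeasurable
  haveI : IsProbabilityMeasure (μ.map φ) := Measure.isProbabilityMeasure_map hφm.aemeasurable
  have hid : Integrable (fun t : ℝ => t) ν := by
    rw [hν]
    exact (integrable_map_measure measurable_id.aestronglyMeasurable
      hzmeas.aemeasurable).mpr hz1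
  have hsq : Integrable (fun t : ℝ => t^2) ν := by
    rw [hν]
    exact (integrable_map_measure (measurable_id.pow_const 2).aestronglyMeasurable
      hzmeas.aemeasurable).mpr hz2
  have hmean : ∫ t, t ∂ν = 0 := by
    rw [hν, integral_map (f := fun t : ℝ => t) hzmeas.aemeasurable measurable_id.aestronglyMeasurable]
    exact hzmean
  have hvar : ∫ t, t^2 ∂ν = 1 := by
    rw [hν, integral_map (f := fun t : ℝ => t^2) hzmeas.aemeasurable (measurable_id.pow_const 2).aestronglyMeasurable]
    exact hzvar
  have hpairae : AEMeasurable (fun ω => (φ ω, z ω)) μ :=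
    (hφm.prodMk hzmeas).aemeasurable
  -- first moment
  have hG1meas : Measurable (fun pp : (ℝ × ℝ) × ℝ => pp.1.1 + pp.1.2 * pp.2) :=
    (measurable_fst.comp measurable_fst).add
      ((measurable_snd.comp measurable_fst).mul measurable_snd)
  have hint1 : Integrable (fun pp : (ℝ × ℝ) × ℝ => pp.1.1 + pp.1.2 * pp.2)
      ((μ.map φ).prod ν) := by
    rw [← hmap]
    exact (integrable_map_measure hG1meas.aestronglyMeasurable hpairae).mpr h1
  have hN1 := hint1.integral_norm_prod_left
  have hbound1 : ∀ x : ℝ × ℝ, |x.1| ≤ ∫ t, ‖x.1 + x.2 * t‖ ∂ν := by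
    intro x
    have hxint : Integrable (fun t : ℝ => x.1 + x.2 * t) ν :=
      (integrable_const _).add (hid.const_mul _)
    have hval : ∫ t, (x.1 + x.2 * t) ∂ν = x.1 := by
      rw [integral_add (integrable_const _) (hid.const_mul _), integral_const,
        integral_const_mul, hmean]
      simp
    calc |x.1| = ‖∫ t, (x.1 + x.2 * t) ∂ν‖ := by rw [hval]; rfl
      _ ≤ ∫ t, ‖x.1 + x.2 * t‖ ∂ν := norm_integral_le_integral_norm _
  have hfst : Integrable (fun x : ℝ × ℝ => x.1) (μ.map φ) := by
    refine Integrable.mono hN1 measurable_fst.aestronglyMeasurable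
      (Filter.Eventually.of_forall fun x => ?_)
    rw [Real.norm_eq_abs, Real.norm_eq_abs, abs_of_nonneg (integral_nonneg fun t => norm_nonneg _)]
    exact hbound1 x
  have hIA : Integrable A μ :=
    (integrable_map_measure measurable_fst.aestronglyMeasurable hφm.aemeasurable).mp hfst
  -- second moment
  have hG2meas : Measurable (fun pp : (ℝ × ℝ) × ℝ => (pp.1.1 + pp.1.2 * pp.2)^2) :=
    hG1meas.pow_const 2
  have hint2 : Integrable (fun pp : (ℝ × ℝ) × ℝ => (pp.1.1 + pp.1.2 * pp.2)^2)
      ((μ.map φ).prod ν) := by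
    rw [← hmap]
    exact (integrable_map_measure hG2meas.aestronglyMeasurable hpairae).mpr h2
  have hN2 := hint2.integral_norm_prod_left
  have hval2 : ∀ x : ℝ × ℝ, ∫ t, ‖(x.1 + x.2 * t)^2‖ ∂ν = x.1^2 + x.2^2 := by
    intro x
    have hpt : ∀ t : ℝ, (x.1 + x.2 * t)^2 = x.1^2 + ((2*x.1*x.2) * t + x.2^2 * t^2) :=
      fun t => by ring
    have hi1 : Integrable (fun t : ℝ => (2*x.1*x.2) * t) ν := hid.const_mul _
    have hi2 : Integrable (fun t : ℝ => x.2^2 * t^2) ν := hsq.const_mul _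
    have hi12 : Integrable (fun t : ℝ => (2*x.1*x.2) * t + x.2^2 * t^2) ν := hi1.add hi2
    calc ∫ t, ‖(x.1 + x.2 * t)^2‖ ∂ν = ∫ t, (x.1 + x.2 * t)^2 ∂ν := by
          refine integral_congr_ae (Filter.Eventually.of_forall fun t => ?_)
          show ‖(x.1 + x.2 * t)^2‖ = (x.1 + x.2 * t)^2
          rw [Real.norm_eq_abs, abs_of_nonneg (sq_nonneg _)]
      _ = ∫ t, (x.1^2 + ((2*x.1*x.2) * t + x.2^2 * t^2)) ∂ν := by
          refine integral_congr_ae (Filter.Eventually.of_forall fun t => hpt t)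
      _ = x.1^2 + x.2^2 := by
          rw [integral_add (integrable_const _) hi12, integral_const,
            integral_add hi1 hi2, integral_const_mul, integral_const_mul, hmean, hvar]
          simp
  have hfst2 : Integrable (fun x : ℝ × ℝ => x.1^2) (μ.map φ) := by
    refine Integrable.mono hN2 (measurable_fst.pow_const 2).aestronglyMeasurable
      (Filter.Eventually.of_forall fun x => ?_)
    rw [Real.norm_eq_abs, Real.norm_eq_abs, abs_of_nonneg (integral_nonneg fun t => norm_nonneg _),
      hval2, abs_of_nonneg (sq_nonneg _)]
    nlinarith [sq_nonneg x.2]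
  have hsnd2 : Integrable (fun x : ℝ × ℝ => x.2^2) (μ.map φ) := by
    refine Integrable.mono hN2 (measurable_snd.pow_const 2).aestronglyMeasurable
      (Filter.Eventually.of_forall fun x => ?_)
    rw [Real.norm_eq_abs, Real.norm_eq_abs, abs_of_nonneg (integral_nonneg fun t => norm_nonneg _),
      hval2, abs_of_nonneg (sq_nonneg _)]
    nlinarith [sq_nonneg x.1]
  refine ⟨hIA, ?_, ?_⟩
  · exact (integrable_map_measure (measurable_fst.pow_const 2).aestronglyMeasurable
      hφm.aemeasurable).mp hfst2
  · exact (integrable_map_measure (measurable_snd.pow_const 2).aestronglyMeasurable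
      hφm.aemeasurable).mp hsnd2

lemma sm_comap_z : StronglyMeasurable[MeasurableSpace.comap z inferInstance] z :=
  Measurable.stronglyMeasurable (fun t ht => ⟨t, ht, rfl⟩)

lemma cond_moments (hm : m ≤ mΩ)
    (hA : StronglyMeasurable[m] A) (hB : StronglyMeasurable[m] B)
    (hz : ProbabilityTheory.Indep (MeasurableSpace.comap z inferInstance) m μ)
    (hzmeas : Measurable[mΩ] z)
    (hz1 : Integrable z μ) (hz2 : Integrable (fun ω => z ω ^ 2) μ)
    (hzmean : ∫ ω, z ω ∂μ = 0) (hzvar : ∫ ω, z ω ^ 2 ∂μ = 1)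
    (h1 : Integrable (fun ω => A ω + B ω * z ω) μ)
    (h2 : Integrable (fun ω => (A ω + B ω * z ω)^2) μ) :
    (μ[(fun ω => A ω + B ω * z ω)|m] =ᵐ[μ] A) ∧
    (μ[(fun ω => (A ω + B ω * z ω)^2)|m] =ᵐ[μ] fun ω => A ω^2 + B ω^2) := by
  obtain ⟨hIA, hIA2, hIB2⟩ := int_marginals hm hA hB hz hzmeas hz1 hz2 hzmean hzvar h1 h2
  haveI : SigmaFinite (μ.trim hm) := (isFiniteMeasure_trim hm).toSigmaFinite
  have hzle : MeasurableSpace.comap z inferInstance ≤ mΩ := measurable_iff_comap_le.mp hzmeas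
  have hcz : μ[z|m] =ᵐ[μ] fun _ => 0 := by
    have h := condExp_indep_eq hzle hm sm_comap_z hz
    exact h.trans (Filter.Eventually.of_forall fun ω => hzmean)
  have hcz2 : μ[(fun ω => z ω^2)|m] =ᵐ[μ] fun _ => 1 := by
    have h := condExp_indep_eq hzle hm (sm_comap_z.pow 2) hz
    exact h.trans (Filter.Eventually.of_forall fun ω => hzvar)
  -- integrability of pieces
  have hBz : Integrable (fun ω => B ω * z ω) μ := by
    have he : (fun ω => B ω * z ω) = fun ω => (A ω + B ω * z ω) - A ω :=
      funext fun ω => by ring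
    rw [he]
    exact h1.sub hIA
  have hABmeas : AEStronglyMeasurable A μ := hIA.aestronglyMeasurable
  have hsum2 : Integrable (fun ω => A ω^2 + (A ω + B ω * z ω)^2) μ := hIA2.add h2
  have hImix : Integrable (fun ω => A ω * (A ω + B ω * z ω)) μ := by
    refine Integrable.mono hsum2 (hABmeas.mul h1.aestronglyMeasurable)
      (Filter.Eventually.of_forall fun ω => ?_)
    rw [Real.norm_eq_abs, Real.norm_eq_abs, abs_mul]
    have h2le : |A ω| * |A ω + B ω * z ω| ≤ (A ω^2 + (A ω + B ω * z ω)^2)/2 := by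
      nlinarith [sq_nonneg (|A ω| - |A ω + B ω * z ω|), sq_abs (A ω),
        sq_abs (A ω + B ω * z ω), abs_nonneg (A ω), abs_nonneg (A ω + B ω * z ω)]
    refine h2le.trans ?_
    rw [abs_of_nonneg (by positivity : (0:ℝ) ≤ A ω^2 + (A ω + B ω * z ω)^2)]
    nlinarith [sq_nonneg (A ω), sq_nonneg (A ω + B ω * z ω)]
  have hg1 : Integrable ((fun ω => 2 * (A ω * B ω)) * z) μ := by
    have he : ((fun ω => 2 * (A ω * B ω)) * z)
        = fun ω => 2 * (A ω * (A ω + B ω * z ω)) - 2 * (A ω^2) := funext fun ω => by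
      show 2 * (A ω * B ω) * z ω = _
      ring
    rw [he]
    exact (hImix.const_mul 2).sub (hIA2.const_mul 2)
  have hg2 : Integrable ((fun ω => B ω^2) * (fun ω => z ω^2)) μ := by
    have he : ((fun ω => B ω^2) * (fun ω => z ω^2))
        = fun ω => (A ω + B ω * z ω)^2 - (2 * (A ω * (A ω + B ω * z ω)) - A ω^2) :=
      funext fun ω => by
        show B ω^2 * z ω^2 = _
        ring
    rw [he]
    exact h2.sub ((hImix.const_mul 2).sub hIA2)
  have hBz' : Integrable (B * z) μ := hBz
  have hIA2' : Integrable (fun ω => A ω^2) μ := hIA2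
  constructor
  · have hfeq : (fun ω => A ω + B ω * z ω) = (A + B * z) := rfl
    rw [hfeq]
    have h0 := condExp_add (m := m) hIA hBz'
    have hceA : μ[A|m] = A := condExp_of_stronglyMeasurable hm hA hIA
    have hmul := condExp_mul_of_stronglyMeasurable_left hB hBz' hz1
    filter_upwards [h0, hmul, hcz] with ω hω0 hω2 hωz
    rw [hω0, Pi.add_apply, hceA, hω2, Pi.mul_apply, hωz]
    simp
  · set G1 : Ω → ℝ := (fun ω => 2 * (A ω * B ω)) * z with hG1
    set G2 : Ω → ℝ := (fun ω => B ω^2) * (fun ω => z ω^2) with hG2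
    have hsmA2 : StronglyMeasurable[m] (fun ω => A ω^2) := hA.pow 2
    have hdecomp : (fun ω => (A ω + B ω * z ω)^2)
        = (((fun ω => A ω^2) + G1) + G2) := by
      funext ω
      show (A ω + B ω * z ω)^2 = A ω^2 + (2 * (A ω * B ω)) * z ω + B ω^2 * z ω^2
      ring
    have h0 := condExp_add (m := m) (hIA2'.add hg1) hg2
    have h0' := condExp_add (m := m) hIA2' hg1
    have hceA2 : μ[(fun ω => A ω^2)|m] = fun ω => A ω^2 :=
      condExp_of_stronglyMeasurable hm hsmA2 hIA2'
    have hsm1 : StronglyMeasurable[m] (fun ω => 2 * (A ω * B ω)) := (hA.mul hB).const_mul 2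
    have hmul1 := condExp_mul_of_stronglyMeasurable_left hsm1 hg1 hz1
    have hmul2 := condExp_mul_of_stronglyMeasurable_left (show StronglyMeasurable[m] (fun ω => B ω^2)
      from hB.pow 2) hg2 hz2
    rw [hdecomp]
    filter_upwards [h0, h0', hmul1, hmul2, hcz, hcz2] with ω hω0 hω0' hωm1 hωm2 hωz hωz2
    rw [hω0, Pi.add_apply, hω0', Pi.add_apply, hceA2, hωm1, Pi.mul_apply, hωm2, Pi.mul_apply,
      hωz, hωz2]
    simp

end ProbSection

end ArchAux

open ProbabilityTheory

/-- the ARCH model is a special case of the ES model for the first two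
conditional moments: they are the stated polynomials in the lagged values, hence linear
functionals of the signature of the time-joined path of the lagged series. -/
theorem arch_is_ES {Ω : Type*} (m : MeasurableSpace Ω) {mΩ : MeasurableSpace Ω}
    {μ : Measure Ω} [IsProbabilityMeasure μ] (hm : m ≤ mΩ)
    (q Q k : ℕ) (hq : 1 ≤ q) (hQ : 1 ≤ Q) (hk : q + Q + 1 ≤ k)
    (r : ℕ → Ω → ℝ) (z : Ω → ℝ) (σf : Ω → ℝ) (μf : ℕ → Ω → ℝ) (α β : ℕ → ℝ) (tm : ℕ → ℝ)
    (hμf : ∀ j ω, μf j ω = β 0 + ∑ i ∈ Finset.range Q, β (i+1) * r (j - (i+1)) ω)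
    (hσ : ∀ ω, σf ω ^ 2
      = α 0 + ∑ i ∈ Finset.range q, α (i+1) * (r (k - (i+1)) ω - μf (k - (i+1)) ω) ^ 2)
    (hσm : StronglyMeasurable[m] σf)
    (hrm : ∀ j < k, StronglyMeasurable[m] (r j))
    (hr : ∀ ω, r k ω = μf k ω + σf ω * z ω)
    (hz : Indep (MeasurableSpace.comap z (inferInstance : MeasurableSpace ℝ)) m μ)
    (hzmeas : Measurable z)
    (hz1 : Integrable z μ) (hz2 : Integrable (fun ω => z ω ^ 2) μ)
    (hzmean : ∫ ω, z ω ∂μ = 0) (hzvar : ∫ ω, z ω ^ 2 ∂μ = 1)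
    (hr1 : Integrable (r k) μ) (hr2 : Integrable (fun ω => r k ω ^ 2) μ)
    (htm : ∀ i j, i ≠ j → tm i ≠ tm j)
    (R : Ω → ℝ → Fin 2 → ℝ)
    (hR1 : ∀ ω, ∀ s ∈ Set.Icc (0:ℝ) 1,
      R ω s = ![tm (k - (q + Q)), r (k - (q + Q)) ω * s])
    (hR2 : ∀ ω, ∀ j, j + 1 < q + Q → ∀ s ∈ Set.Icc (2*j+1 : ℝ) (2*j+2),
      R ω s = ![tm (k - (q + Q) + j)
          + (tm (k - (q + Q) + j + 1) - tm (k - (q + Q) + j)) * (s - (2*j+1)),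
        r (k - (q + Q) + j) ω])
    (hR3 : ∀ ω, ∀ j, j + 1 < q + Q → ∀ s ∈ Set.Icc (2*j+2 : ℝ) (2*j+3),
      R ω s = ![tm (k - (q + Q) + j + 1),
        r (k - (q + Q) + j) ω
          + (r (k - (q + Q) + j + 1) ω - r (k - (q + Q) + j) ω) * (s - (2*j+2))]) :
    (μ[r k|m] =ᵐ[μ] μf k) ∧
    (μ[fun ω => r k ω ^ 2|m] =ᵐ[μ] fun ω =>
      μf k ω ^ 2 + α 0
        + ∑ i ∈ Finset.range q, α (i+1) * (r (k - (i+1)) ω - μf (k - (i+1)) ω) ^ 2) ∧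
    ∀ n ∈ ({1, 2} : Finset ℕ), ∃ f : List (Fin 2) →₀ ℝ,
      μ[fun ω => r k ω ^ n|m] =ᵐ[μ] fun ω =>
        formEval f (Sig (R ω) 0 (2*(q + Q) - 1)) := by

  classical
  set M := q + Q with hM
  have hM2 : 2 ≤ M := by omega
  set tt : ℕ → ℝ := fun j => tm (k - M + j) with htt
  set τ : ℕ → ℝ := fun j => tt j - tt 0 with hτdef
  set ρ : ℕ → Ω → ℝ := fun j ω => r (k - M + j) ω with hρ
  set D : Ω → ℕ → ℝ := fun ω j => if j = 0 then ρ 0 ω else ρ j ω - ρ (j-1) ω with hD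
  have hτ0 : τ 0 = 0 := by simp [hτdef]
  -- Probability part
  have hμfsm : StronglyMeasurable[m] (μf k) := by
    have he : μf k = fun ω => β 0 + ∑ i ∈ Finset.range Q, β (i+1) * r (k - (i+1)) ω :=
      funext fun ω => hμf k ω
    rw [he]
    exact stronglyMeasurable_const.add (Finset.stronglyMeasurable_fun_sum _ fun i hi =>
      (hrm (k - (i+1)) (by omega)).const_mul _)
  have h1 : Integrable (fun ω => μf k ω + σf ω * z ω) μ := by
    have he : (fun ω => μf k ω + σf ω * z ω) = r k := funext fun ω => (hr ω).symm
    rw [he]; exact hr1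
  have h2 : Integrable (fun ω => (μf k ω + σf ω * z ω)^2) μ := by
    have he : (fun ω => (μf k ω + σf ω * z ω)^2) = fun ω => r k ω ^2 :=
      funext fun ω => by rw [← hr ω]
    rw [he]; exact hr2
  have hzmeas' : Measurable[mΩ] z := hzmeas
  obtain ⟨hc1, hc2⟩ := ArchAux.cond_moments hm hμfsm hσm hz hzmeas' hz1 hz2 hzmean hzvar h1 h2
  have part1 : μ[r k|m] =ᵐ[μ] μf k := by
    have he : (fun ω => μf k ω + σf ω * z ω) = r k := funext fun ω => (hr ω).symm
    rwa [he] at hc1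
  have part2 : μ[(fun ω => r k ω^2)|m] =ᵐ[μ] fun ω =>
      μf k ω ^ 2 + α 0 + ∑ i ∈ Finset.range q, α (i+1)
        * (r (k-(i+1)) ω - μf (k-(i+1)) ω)^2 := by
    have he : (fun ω => (μf k ω + σf ω * z ω)^2) = fun ω => r k ω ^2 :=
      funext fun ω => by rw [← hr ω]
    rw [he] at hc2
    refine hc2.trans (Filter.Eventually.of_forall fun ω => ?_)
    show μf k ω ^ 2 + σf ω ^ 2 = _
    rw [hσ ω]
    ring
  -- path structure
  have hseg : ∀ ω, ∀ n, n < 2*M-1 → ∀ s ∈ Set.Icc (n:ℝ) ((n:ℝ)+1), ∀ i,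
      R ω s i = R ω (n:ℝ) i + (s - (n:ℝ)) * ArchAux.Vm τ (D ω) n i := by
    intro ω n hn s hs i
    rcases Nat.even_or_odd n with ⟨j, hj⟩ | ⟨j, hj⟩
    · rcases Nat.eq_zero_or_pos j with hj0 | hjpos
      · have hn0 : n = 0 := by omega
        subst hn0
        have hx1 := hR1 ω s (by simpa using hs)
        have hx2 := hR1 ω ((0:ℕ):ℝ) (by norm_num)
        rw [hx1, hx2]
        have hV : ArchAux.Vm τ (D ω) 0 = ![0, D ω 0] := by simp [ArchAux.Vm]
        rw [hV]
        fin_cases i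
        · simp
        · simp [hD, hρ]
          ring
      · -- even segment n = 2j', j = j'+1 ... n = j + j with j ≥ 1
        set j' := j - 1 with hj'
        have hnval : n = 2*j' + 2 := by omega
        have hj'M : j' + 1 < M := by omega
        have hcast : (n:ℝ) = 2*(j':ℝ)+2 := by rw [hnval]; push_cast; ring
        have hx1 := hR3 ω j' hj'M s
          (by rw [hcast] at hs; exact ⟨by linarith [hs.1], by linarith [hs.2]⟩)
        have hx2 := hR3 ω j' hj'M ((n:ℕ):ℝ) (by rw [hcast]; constructor <;> linarith)
        rw [hx1, hx2]
        have hmod : n % 2 = 0 := by omega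
        have hdiv : n / 2 = j' + 1 := by omega
        have hV : ArchAux.Vm τ (D ω) n = ![0, D ω (j'+1)] := by
          simp [ArchAux.Vm, hmod, hdiv]
        rw [hV]
        fin_cases i
        · simp
        · show r (k-M+j') ω + (r (k-M+j'+1) ω - r (k-M+j') ω) * (s - (2*(j':ℝ)+2))
              = (r (k-M+j') ω + (r (k-M+j'+1) ω - r (k-M+j') ω) * ((n:ℝ) - (2*(j':ℝ)+2)))
                + (s - (n:ℝ)) * D ω (j'+1)
          have hDval : D ω (j'+1) = r (k - M + j' + 1) ω - r (k - M + j') ω := by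
            have hidx : k - M + (j'+1) = k - M + j' + 1 := by omega
            simp [hD, hρ, hidx]
          rw [hDval, hcast]
          ring
    · -- odd n = 2j+1
      have hjM : j + 1 < M := by omega
      have hcast : (n:ℝ) = 2*(j:ℝ)+1 := by rw [hj]; push_cast; ring
      have hx1 := hR2 ω j hjM s
        (by rw [hcast] at hs; exact ⟨by linarith [hs.1], by linarith [hs.2]⟩)
      have hx2 := hR2 ω j hjM ((n:ℕ):ℝ) (by rw [hcast]; constructor <;> linarith)
      rw [hx1, hx2]
      have hmod : n % 2 = 1 := by omega
      have hdiv : n / 2 = j := by omega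
      have hV : ArchAux.Vm τ (D ω) n = ![τ (j+1) - τ j, 0] := by
        simp [ArchAux.Vm, hmod, hdiv]
      rw [hV]
      fin_cases i
      · show tm (k-M+j) + (tm (k-M+j+1) - tm (k-M+j)) * (s - (2*(j:ℝ)+1))
            = (tm (k-M+j) + (tm (k-M+j+1) - tm (k-M+j)) * ((n:ℝ) - (2*(j:ℝ)+1)))
              + (s - (n:ℝ)) * (τ (j+1) - τ j)
        have h1 : τ (j+1) - τ j = tm (k - M + j + 1) - tm (k - M + j) := by
          have hidx : k - M + (j+1) = k - M + j + 1 := by omega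
          simp only [hτdef, htt, hidx]
          ring
        rw [h1, hcast]
        ring
      · simp
  -- signature values
  set Y : Ω → (List (Fin 2) → ℝ) := fun ω => Sig (R ω) 0 ((2*M - 1 : ℕ) : ℝ) with hY
  have hSig := fun ω => ArchAux.Sig_values (m := M) τ (D ω) hτ0 (R ω) (hseg ω)
  have hL : ∀ ω p, Y ω ((ArchAux.hwd 0 p).reverse)
      = ∑ i ∈ Finset.range M, D ω i * (τ i ^ p / (Nat.factorial p)) :=
    fun ω p => (hSig ω).1 p
  have hK : ∀ ω s p, Y ω ((ArchAux.kwd s p).reverse) = ArchAux.Kf (D ω) τ M s p :=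
    fun ω s p => (hSig ω).2 s p
  have hτinj : Set.InjOn τ (Finset.range M) := by
    intro a ha b hb hab
    simp only [Finset.coe_range, Set.mem_Iio] at ha hb
    by_contra hne
    refine htm (k - M + a) (k - M + b) (by omega) ?_
    have h' : tt a = tt b := by
      rw [hτdef] at hab
      simp only at hab
      linarith
    simpa [htt] using h'
  -- InS atoms
  have hInSc : ∀ c : ℝ, ArchAux.InS Y (fun _ => c) := by
    intro c
    refine ArchAux.InS_congr (fun ω => ?_) (ArchAux.InS_smul c (ArchAux.InS_word (Y := Y) []))
    rw [show Y ω ([] : List (Fin 2)) = 1 from rfl]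
    ring
  have hrhosum : ∀ (j : ℕ) ω, ρ j ω = ∑ i ∈ Finset.range (j+1), D ω i := by
    intro j ω
    induction j with
    | zero => simp [hD]
    | succ jj ih =>
      rw [Finset.sum_range_succ, ← ih]
      simp [hD]
  have hInSrho : ∀ j, j < M → ArchAux.InS Y (fun ω => ρ j ω) := by
    intro j hj
    refine ArchAux.InS_congr (fun ω => (hrhosum j ω).symm)
      (ArchAux.InS_sum (Finset.range (j+1)) (fun i ω => D ω i) fun i hi => ?_)
    exact ArchAux.InS_D hL hτinj (lt_of_lt_of_le (Finset.mem_range.mp hi) (by omega))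
  have hInSrr : ∀ j1, j1 < M → ∀ j2, j2 < M →
      ArchAux.InS Y (fun ω => ρ j1 ω * ρ j2 ω) := by
    intro j1 hj1 j2 hj2
    have hpt : ∀ ω, (∑ i1 ∈ Finset.range (j1+1), ∑ i2 ∈ Finset.range (j2+1),
        D ω i1 * D ω i2) = ρ j1 ω * ρ j2 ω := by
      intro ω
      rw [hrhosum j1 ω, hrhosum j2 ω, Finset.sum_mul_sum]
    refine ArchAux.InS_congr hpt (ArchAux.InS_sum _ _ fun i1 hi1 => ArchAux.InS_sum _ _
      fun i2 hi2 => ?_)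
    exact ArchAux.InS_DD hK hτinj
      (lt_of_lt_of_le (Finset.mem_range.mp hi1) (by omega))
      (lt_of_lt_of_le (Finset.mem_range.mp hi2) (by omega))
  -- affine products
  have hInS_aff : ∀ (c : ℝ) (nn : ℕ) (a : ℕ → ℝ) (e : ℕ → ℕ), (∀ i, i < nn → e i < M) →
      ArchAux.InS Y (fun ω => c + ∑ i ∈ Finset.range nn, a i * ρ (e i) ω) := by
    intro c nn a e he
    exact ArchAux.InS_add (hInSc c) (ArchAux.InS_sum _ _ fun i hi =>
      ArchAux.InS_smul (a i) (hInSrho (e i) (he i (Finset.mem_range.mp hi))))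
  have hInS_aff_mul : ∀ (c1 c2 : ℝ) (n1 n2 : ℕ) (a1 a2 : ℕ → ℝ) (e1 e2 : ℕ → ℕ),
      (∀ i, i < n1 → e1 i < M) → (∀ i, i < n2 → e2 i < M) →
      ArchAux.InS Y (fun ω => (c1 + ∑ i ∈ Finset.range n1, a1 i * ρ (e1 i) ω)
        * (c2 + ∑ i ∈ Finset.range n2, a2 i * ρ (e2 i) ω)) := by
    intro c1 c2 n1 n2 a1 a2 e1 e2 h1 h2
    have base := ArchAux.InS_add (ArchAux.InS_add (ArchAux.InS_add (hInSc (c1*c2))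
      (ArchAux.InS_smul c1 (ArchAux.InS_sum (Finset.range n2)
        (fun i ω => a2 i * ρ (e2 i) ω) fun i hi =>
        ArchAux.InS_smul (a2 i) (hInSrho (e2 i) (h2 i (Finset.mem_range.mp hi))))))
      (ArchAux.InS_smul c2 (ArchAux.InS_sum (Finset.range n1)
        (fun i ω => a1 i * ρ (e1 i) ω) fun i hi =>
        ArchAux.InS_smul (a1 i) (hInSrho (e1 i) (h1 i (Finset.mem_range.mp hi))))))
      (ArchAux.InS_sum (Finset.range n1) (fun i1 ω => ∑ i2 ∈ Finset.range n2,
          (a1 i1 * a2 i2) * (ρ (e1 i1) ω * ρ (e2 i2) ω)) fun i1 hi1 =>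
        ArchAux.InS_sum (Finset.range n2) _ fun i2 hi2 =>
        ArchAux.InS_smul _ (hInSrr (e1 i1) (h1 i1 (Finset.mem_range.mp hi1))
          (e2 i2) (h2 i2 (Finset.mem_range.mp hi2))))
    refine ArchAux.InS_congr (fun ω => ?_) base
    have hSS : (∑ i ∈ Finset.range n1, a1 i * ρ (e1 i) ω)
        * (∑ i ∈ Finset.range n2, a2 i * ρ (e2 i) ω)
        = ∑ i1 ∈ Finset.range n1, ∑ i2 ∈ Finset.range n2,
            (a1 i1 * a2 i2) * (ρ (e1 i1) ω * ρ (e2 i2) ω) := by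
      rw [Finset.sum_mul_sum]
      exact Finset.sum_congr rfl fun i1 _ => Finset.sum_congr rfl fun i2 _ => by ring
    rw [← hSS]
    ring
  -- index identities
  have hμf_aff : ∀ c, c ≤ q → ∀ ω, μf (k - c) ω
      = β 0 + ∑ i ∈ Finset.range Q, β (i+1) * ρ (M - c - 1 - i) ω := by
    intro c hc ω
    rw [hμf]
    refine congrArg _ (Finset.sum_congr rfl fun i hi => ?_)
    have hidx : k - c - (i+1) = k - M + (M - c - 1 - i) := by
      have := Finset.mem_range.mp hi
      omega
    rw [hidx]
  have hμfk : ∀ ω, μf k ω = β 0 + ∑ i ∈ Finset.range Q, β (i+1) * ρ (M - 1 - i) ω := by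
    intro ω
    have h := hμf_aff 0 (by omega) ω
    rw [Nat.sub_zero, Nat.sub_zero] at h
    exact h
  -- target 1
  have hT1 : ArchAux.InS Y (μf k) := by
    refine ArchAux.InS_congr (fun ω => ?_)
      (hInS_aff (β 0) Q (fun i => β (i+1)) (fun i => M - 1 - i)
        (fun i hi => by show M - 1 - i < M; omega))
    exact (hμfk ω).symm
  -- affine representation of the residuals
  have hXaff : ∀ i, i < q → ∀ ω,
      ((-(β 0)) + ∑ i' ∈ Finset.range (Q+1),
        (if i' < Q then -(β (i'+1)) else 1)
          * ρ (if i' < Q then M - (i+1) - 1 - i' else M - 1 - i) ω)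
      = r (k - (i+1)) ω - μf (k - (i+1)) ω := by
    intro i hi ω
    rw [Finset.sum_range_succ, if_neg (lt_irrefl Q), if_neg (lt_irrefl Q)]
    have hsum : (∑ i' ∈ Finset.range Q,
        (if i' < Q then -(β (i'+1)) else 1)
          * ρ (if i' < Q then M - (i+1) - 1 - i' else M - 1 - i) ω)
        = -(∑ i' ∈ Finset.range Q, β (i'+1) * ρ (M - (i+1) - 1 - i') ω) := by
      rw [← Finset.sum_neg_distrib]
      refine Finset.sum_congr rfl fun i' hi' => ?_
      rw [if_pos (Finset.mem_range.mp hi'), if_pos (Finset.mem_range.mp hi')]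
      ring
    rw [hsum, hμf_aff (i+1) (by omega) ω]
    have hr' : r (k - (i+1)) ω = ρ (M - 1 - i) ω := by
      have hidx : k - (i+1) = k - M + (M - 1 - i) := by omega
      rw [hidx]
    rw [hr']
    ring
  -- target 2
  have hT2 : ArchAux.InS Y (fun ω => μf k ω ^ 2 + α 0
      + ∑ i ∈ Finset.range q, α (i+1) * (r (k - (i+1)) ω - μf (k - (i+1)) ω) ^ 2) := by
    have hsq : ArchAux.InS Y (fun ω => μf k ω ^ 2) := by
      refine ArchAux.InS_congr (fun ω => ?_)
        (hInS_aff_mul (β 0) (β 0) Q Q (fun i => β (i+1)) (fun i => β (i+1))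
          (fun i => M - 1 - i) (fun i => M - 1 - i)
          (fun i hi => by show M - 1 - i < M; omega)
          (fun i hi => by show M - 1 - i < M; omega))
      rw [← hμfk ω]
      ring
    have hres : ∀ i, i < q → ArchAux.InS Y
        (fun ω => α (i+1) * (r (k - (i+1)) ω - μf (k - (i+1)) ω) ^ 2) := by
      intro i hi
      have lt_helper : ∀ i' : ℕ, (fun i' => if i' < Q then M - (i+1) - 1 - i' else M - 1 - i) i' < M := by
        intro i'
        simp only []
        split <;> omega
      refine ArchAux.InS_smul (α (i+1)) (ArchAux.InS_congr (fun ω => ?_)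
        (hInS_aff_mul (-(β 0)) (-(β 0)) (Q+1) (Q+1)
          (fun i' => if i' < Q then -(β (i'+1)) else 1)
          (fun i' => if i' < Q then -(β (i'+1)) else 1)
          (fun i' => if i' < Q then M - (i+1) - 1 - i' else M - 1 - i)
          (fun i' => if i' < Q then M - (i+1) - 1 - i' else M - 1 - i)
          (fun i' _ => lt_helper i') (fun i' _ => lt_helper i')))
      rw [hXaff i hi ω]
      ring
    exact ArchAux.InS_add (ArchAux.InS_add hsq (hInSc (α 0)))
      (ArchAux.InS_sum (Finset.range q) _ fun i hi => hres i (Finset.mem_range.mp hi))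
  refine ⟨part1, part2, ?_⟩
  intro n hn
  simp only [Finset.mem_insert, Finset.mem_singleton] at hn
  rcases hn with rfl | rfl
  · obtain ⟨f, hf⟩ := hT1
    refine ⟨f, ?_⟩
    have he : (fun ω => r k ω ^ 1) = r k := funext fun ω => pow_one _
    rw [he]
    refine part1.trans (Filter.Eventually.of_forall fun ω => ?_)
    have hb : (2*((q:ℝ) + (Q:ℝ)) - 1) = ((2*M - 1 : ℕ) : ℝ) := by
      rw [Nat.cast_sub (by omega : 1 ≤ 2*M)]
      push_cast [hM]
      ring
    rw [hb]
    exact hf ω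
  · obtain ⟨f, hf⟩ := hT2
    refine ⟨f, ?_⟩
    refine part2.trans (Filter.Eventually.of_forall fun ω => ?_)
    have hb : (2*((q:ℝ) + (Q:ℝ)) - 1) = ((2*M - 1 : ℕ) : ℝ) := by
      rw [Nat.cast_sub (by omega : 1 ≤ 2*M)]
      push_cast [hM]
      ring
    rw [hb]
    exact hf ω
end
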